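/- arXiv:1306.0630 — 5 statements merged into one kernel-verified Lean document; each statement's English description precedes it below -/
import Mathlib

section
/- For any non-constant boolean function f on n variables, liminf_{k→∞} C(f^(k))^{1/k} = Ĉ(f), where Ĉ(f) is the maximum over all f-compatible assignment selectors α of the minimum over all witness pairs for α of the spectral radius of the associated profile matrix. -/
open Filter

lemma exists_Icc_mem_inter_or_Ioo_notMem_union {A B : Set ℝ} (hA : IsClosed A) (hB : IsClosed B)
    (hA1 : 1 ∈ A) (hB0 : 0 ∈ B) :
    (∃ t ∈ Set.Icc (0 : ℝ) 1, t ∈ A ∩ B) ∨ ∃ t ∈ Set.Ioo (0 : ℝ) 1, t ∉ A ∪ B := by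
  by_cases hcover : Set.Icc (0 : ℝ) 1 ⊆ A ∪ B
  · exact .inl (isPreconnected_closed_iff.1 isPreconnected_Icc A B hA hB hcover
      ⟨1, Set.right_mem_Icc.2 zero_le_one, hA1⟩ ⟨0, Set.left_mem_Icc.2 zero_le_one, hB0⟩)
  · obtain ⟨t, ht, htAB⟩ := Set.not_subset.1 hcover
    refine .inr ⟨t, ⟨lt_of_le_of_ne ht.1 ?_, lt_of_le_of_ne ht.2 ?_⟩, htAB⟩ <;>
      rintro rfl <;> simp_all

namespace BS

variable {I : Type*} [Fintype I] [DecidableEq I]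

/-- Flip the bits of `x` indexed by `B`. -/
def flipSet (x : I → Bool) (B : Finset I) : I → Bool :=
  fun i => if i ∈ B then !(x i) else x i

/-- `B` is a block of `f` at `x`. -/
def IsBlock (f : (I → Bool) → Bool) (x : I → Bool) (B : Finset I) : Prop :=
  f (flipSet x B) ≠ f x

/-- Block sensitivity of `f` at `x`: the maximum number of pairwise disjoint blocks. -/
noncomputable def bsAt (f : (I → Bool) → Bool) (x : I → Bool) : ℕ :=
  sSup {k | ∃ B : Fin k → Finset I, (∀ t, IsBlock f x (B t)) ∧
    ∀ t t', t ≠ t' → Disjoint (B t) (B t')}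

/-- Block sensitivity of `f`. -/
noncomputable def bs (f : (I → Bool) → Bool) : ℕ :=
  sSup {k | ∃ x, k = bsAt f x}

/-- `b`-block sensitivity of `f`. -/
noncomputable def bsb (f : (I → Bool) → Bool) (b : Bool) : ℕ :=
  sSup {k | ∃ x, f x = b ∧ k = bsAt f x}

/-- `M`-fold block sensitivity of `f` at `x`. -/
noncomputable def bsMAt (f : (I → Bool) → Bool) (M : ℕ) (x : I → Bool) : ℕ :=
  sSup {k | ∃ B : Fin k → Finset I, (∀ t, IsBlock f x (B t)) ∧
    ∀ i : I, (Finset.univ.filter (fun t => i ∈ B t)).card ≤ M}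

/-- `M`-fold `b`-block sensitivity of `f`. -/
noncomputable def bsMb (f : (I → Bool) → Bool) (M : ℕ) (b : Bool) : ℕ :=
  sSup {k | ∃ x, f x = b ∧ k = bsMAt f M x}

/-- Fractional block sensitivity of `f` at `x`. -/
noncomputable def fbsAt (f : (I → Bool) → Bool) (x : I → Bool) : ℝ :=
  sSup {s | ∃ lam : Finset I → ℝ, (∀ B, 0 ≤ lam B) ∧
    (∀ B, ¬ IsBlock f x B → lam B = 0) ∧
    (∀ i : I, ∑ B ∈ Finset.univ.filter (fun B : Finset I => i ∈ B), lam B ≤ 1) ∧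
    s = ∑ B : Finset I, lam B}

/-- Fractional block sensitivity of `f`. -/
noncomputable def fbs (f : (I → Bool) → Bool) : ℝ :=
  sSup {s | ∃ x, s = fbsAt f x}

/-- Fractional `b`-block sensitivity of `f`. -/
noncomputable def fbsb (f : (I → Bool) → Bool) (b : Bool) : ℝ :=
  sSup {s | ∃ x, f x = b ∧ s = fbsAt f x}

/-- Certificate complexity of `f` at `x`. -/
noncomputable def CAt (f : (I → Bool) → Bool) (x : I → Bool) : ℕ :=
  sInf {k | ∃ S : Finset I, (∀ B, IsBlock f x B → (S ∩ B).Nonempty) ∧ k = S.card}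

/-- Certificate complexity of `f`. -/
noncomputable def Cm (f : (I → Bool) → Bool) : ℕ :=
  sSup {k | ∃ x, k = CAt f x}

/-- `b`-certificate complexity of `f`. -/
noncomputable def Cb (f : (I → Bool) → Bool) (b : Bool) : ℕ :=
  sSup {k | ∃ x, f x = b ∧ k = CAt f x}

/-- Fractional certificate complexity of `f` at `x`. -/
noncomputable def fCAt (f : (I → Bool) → Bool) (x : I → Bool) : ℝ :=
  sInf {s | ∃ w : I → ℝ, (∀ i, 0 ≤ w i ∧ w i ≤ 1) ∧
    (∀ B, IsBlock f x B → 1 ≤ ∑ i ∈ B, w i) ∧ s = ∑ i, w i}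

/-- Fractional certificate complexity of `f`. -/
noncomputable def fC (f : (I → Bool) → Bool) : ℝ :=
  sSup {s | ∃ x, s = fCAt f x}

/-- Composition `f ∘ g` of boolean functions. -/
def comp {J : Type*} [Fintype J] [DecidableEq J]
    (f : (I → Bool) → Bool) (g : (J → Bool) → Bool) :
    ((I × J) → Bool) → Bool :=
  fun x => f (fun i => g (fun j => x (i, j)))

/-- `k`-fold iterated composition `f^(k)` of an `n`-variate boolean function; the
variables of `f^(k)` are indexed by strings in `Fin k → Fin n`.  `f^(0)` is the
univariate identity function. -/
def iter {n : ℕ} (f : (Fin n → Bool) → Bool) :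
    (k : ℕ) → ((Fin k → Fin n) → Bool) → Bool
  | 0, x => x (fun i => i.elim0)
  | k + 1, x => f (fun i => iter f k (fun s => x (Fin.cons i s)))

/-- Spectral radius of a real square matrix: the maximum of `|μ|` over the complex
eigenvalues `μ` of the matrix. -/
noncomputable def specRad {m : Type*} [Fintype m] [DecidableEq m]
    (A : Matrix m m ℝ) : ℝ :=
  sSup {r | ∃ μ : ℂ, μ ∈ spectrum ℂ (A.map Complex.ofReal) ∧ r = ‖μ‖}

end BS

namespace BS

/-- Profile matrix of an assignment selector `α` together with a witness pair `w`:
the `(s,t)` entry is the number of indices `i ∈ w s` with `α s i = t`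
(rows/columns indexed by `Bool`, with `false` corresponding to the 0-input). -/
noncomputable def profile {I : Type*} [Fintype I] [DecidableEq I]
    (α : Bool → I → Bool) (w : Bool → Finset I) : Matrix Bool Bool ℝ :=
  fun s t => (((w s).filter (fun i => α s i = t)).card : ℝ)

/-- `Ĉ(f)`: the maximum, over all `f`-compatible assignment selectors `α`, of the
minimum, over all witness pairs `w` for `α`, of the spectral radius of the
associated profile matrix. -/
noncomputable def hatC {I : Type*} [Fintype I] [DecidableEq I]
    (f : (I → Bool) → Bool) : ℝ :=
  sSup {r | ∃ α : Bool → I → Bool, f (α false) = false ∧ f (α true) = true ∧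
    r = sInf {s | ∃ w : Bool → Finset I,
      (∀ b B, IsBlock f (α b) B → ((w b) ∩ B).Nonempty) ∧
      s = specRad (profile α w)}}

end BS

/-!
A certificate of `f` at the inner values of `f ∘ g`, together with minimal certificates of `g`
on its rows, certifies `f ∘ g`; conversely, slicing a minimal certificate of `f ∘ g` row by row
yields such a family. So the certificate complexities of `f^(k+1)` are governed by those of
`f^(k)` through a max-min linear recursion in the two quantities indexed by the output bit.

Weight the two bit values by `u = (1 - t, t)`; an input `y` is `r`-heavy if every certificate
at `y` weighs at least `r · u (f y)`. The weight of `w b` at `α b` is the `b`-th entry of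
`profile α w *ᵥ u`, so the Collatz–Wielandt bounds for nonnegative `2 × 2` matrices turn spectral
radii into weights of certificates. The set of `t` at which a `b`-input is heavy is closed and
contains the endpoint where `u b = 0`, so by connectedness of `[0, 1]` the sets for the two
values of `b` either meet or both miss some `t`. For the optimal selector and `r = Ĉ(f)` the
strict Collatz–Wielandt bound rules out a common miss, and plugging hard inputs of `f^(k)` into
two inputs heavy at a common `t` gives `C(f^(k)) ≥ Ĉ(f)^k / 2`. For `r > Ĉ(f)` the sets cannot
meet, and at a `t ∈ (0, 1)` where no input is heavy every input has a certificate of weight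
below `r · u (f y)`, which gives `C(f^(k)) = O(r^k)`.
-/

lemma tendsto_rpow_one_div_of_pow_bounds {a : ℕ → ℝ} {r c : ℝ} (hr : 0 ≤ r) (hc : 0 < c)
    (hlow : ∀ k, c * r ^ k ≤ a k) (hup : ∀ r' > r, ∃ K, ∀ k, a k ≤ K * r' ^ k) :
    Tendsto (fun k : ℕ => a k ^ (1 / (k : ℝ))) atTop (nhds r) := by
  have hroot (K x : ℝ) (hK : 0 < K) (hx : 0 ≤ x) :
      Tendsto (fun k : ℕ => (K * x ^ k) ^ (1 / (k : ℝ))) atTop (nhds x) := by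
    have hK1 : Tendsto (fun k : ℕ => K ^ (1 / (k : ℝ))) atTop (nhds 1) := by
      simpa [Function.comp_def] using (Real.continuousAt_const_rpow hK.ne').tendsto.comp
        tendsto_one_div_atTop_nhds_zero_nat
    refine (one_mul x ▸ hK1.mul_const x).congr' ?_
    filter_upwards [eventually_ne_atTop 0] with k hk
    rw [Real.mul_rpow hK.le (pow_nonneg hx k), one_div, Real.pow_rpow_inv_natCast hx hk]
  rw [tendsto_order]
  refine ⟨fun y hy => ?_, fun y hy => ?_⟩
  · filter_upwards [(tendsto_order.1 (hroot c r hc hr)).1 y hy] with k hk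
    exact hk.trans_le (Real.rpow_le_rpow (by positivity) (hlow k) (by positivity))
  · obtain ⟨K, hK⟩ := hup ((r + y) / 2) (by linarith)
    have hK0 : 0 < K := by simpa using hc.trans_le (by simpa using (hlow 0).trans (hK 0))
    filter_upwards [(tendsto_order.1 (hroot K ((r + y) / 2) hK0 (by linarith))).2 y
      (by linarith)] with k hk
    exact (Real.rpow_le_rpow ((by positivity : 0 ≤ c * r ^ k).trans (hlow k)) (hK k)
      (by positivity)).trans_lt hk

namespace BS

section Certificates

variable {I : Type*} [DecidableEq I]

def IsCert (f : (I → Bool) → Bool) (x : I → Bool) (S : Finset I) : Prop :=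
  ∀ B, IsBlock f x B → (S ∩ B).Nonempty

lemma CAt_le_card {f : (I → Bool) → Bool} {x : I → Bool} {S : Finset I} (hS : IsCert f x S) :
    CAt f x ≤ S.card :=
  Nat.sInf_le ⟨S, hS, rfl⟩

variable [Fintype I]

lemma flipSet_filter_ne (x y : I → Bool) :
    flipSet x (Finset.univ.filter fun i => y i ≠ x i) = y := by
  funext i
  cases hy : y i <;> cases hx : x i <;> simp [flipSet, hy, hx]

lemma isCert_iff {f : (I → Bool) → Bool} {x : I → Bool} {S : Finset I} :
    IsCert f x S ↔ ∀ y, (∀ i ∈ S, y i = x i) → f y = f x := by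
  constructor
  · intro hS y hy
    by_contra hne
    obtain ⟨i, hi⟩ := hS _ (show IsBlock f x _ by rwa [IsBlock, flipSet_filter_ne])
    simp only [Finset.mem_inter, Finset.mem_filter] at hi
    exact hi.2.2 (hy i hi.1)
  · intro h B hB
    by_contra hSB
    refine hB (h _ fun i hi => ?_)
    have hiB : i ∉ B := fun hiB => hSB ⟨i, Finset.mem_inter.2 ⟨hi, hiB⟩⟩
    simp [flipSet, hiB]

lemma isCert_univ (f : (I → Bool) → Bool) (x : I → Bool) : IsCert f x Finset.univ :=
  isCert_iff.2 fun y hy => by rw [funext fun i => hy i (Finset.mem_univ i)]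

lemma IsCert.nonempty {f : (I → Bool) → Bool} {x : I → Bool} {S : Finset I}
    (hS : IsCert f x S) (hf : ∃ z, f z ≠ f x) : S.Nonempty := by
  obtain ⟨z, hz⟩ := hf
  by_contra hS0
  rw [Finset.not_nonempty_iff_eq_empty] at hS0
  exact hz (isCert_iff.1 hS z (by simp [hS0]))

lemma exists_isCert_card_eq_CAt (f : (I → Bool) → Bool) (x : I → Bool) :
    ∃ S, IsCert f x S ∧ S.card = CAt f x := by
  obtain ⟨S, hS, hcard⟩ := Nat.sInf_mem (s := {k | ∃ S, IsCert f x S ∧ k = S.card})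
    ⟨_, Finset.univ, isCert_univ f x, rfl⟩
  exact ⟨S, hS, hcard.symm⟩

lemma one_le_CAt {f : (I → Bool) → Bool} {x : I → Bool} (hf : ∃ z, f z ≠ f x) :
    1 ≤ CAt f x := by
  obtain ⟨S, hS, hcard⟩ := exists_isCert_card_eq_CAt f x
  exact hcard ▸ (hS.nonempty hf).card_pos

lemma bddAbove_range_CAt (f : (I → Bool) → Bool) : BddAbove {k | ∃ x, k = CAt f x} :=
  ⟨Fintype.card I, by
    rintro k ⟨x, rfl⟩
    exact (CAt_le_card (isCert_univ f x)).trans Finset.card_univ.le⟩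

lemma CAt_le_Cm (f : (I → Bool) → Bool) (x : I → Bool) : CAt f x ≤ Cm f :=
  le_csSup (bddAbove_range_CAt f) ⟨x, rfl⟩

lemma exists_CAt_eq_Cm (f : (I → Bool) → Bool) : ∃ x, Cm f = CAt f x :=
  Nat.sSup_mem (s := {k | ∃ x, k = CAt f x}) ⟨_, fun _ => false, rfl⟩ (bddAbove_range_CAt f)

lemma isCert_reindex_iff {J : Type*} [Fintype J] [DecidableEq J] (e : J ≃ I)
    {f : (I → Bool) → Bool} {x : I → Bool} {S : Finset J} :
    IsCert (fun y => f (y ∘ e.symm)) (x ∘ e) S ↔ IsCert f x (S.map e.toEmbedding) := by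
  simp only [isCert_iff, Finset.mem_map_equiv, Function.comp_apply]
  constructor
  · intro h y hy
    simpa [Function.comp_def] using h (y ∘ e) fun j hj => hy (e j) (by simpa using hj)
  · intro h y hy
    simpa [Function.comp_def] using h _ fun i hi => by simpa using hy _ hi

lemma CAt_reindex {J : Type*} [Fintype J] [DecidableEq J] (e : J ≃ I)
    (f : (I → Bool) → Bool) (x : I → Bool) :
    CAt (fun y => f (y ∘ e.symm)) (x ∘ e) = CAt f x := by
  apply le_antisymm
  · obtain ⟨S, hS, hcard⟩ := exists_isCert_card_eq_CAt f x
    have hS' : IsCert f x ((S.map e.symm.toEmbedding).map e.toEmbedding) := by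
      simpa [Finset.map_map] using hS
    simpa [← hcard] using CAt_le_card ((isCert_reindex_iff e).2 hS')
  · obtain ⟨S, hS, hcard⟩ := exists_isCert_card_eq_CAt (fun y => f (y ∘ e.symm)) (x ∘ e)
    simpa [← hcard] using CAt_le_card ((isCert_reindex_iff e).1 hS)

end Certificates

section Composition

variable {I J : Type*} [Fintype I] [DecidableEq I] [Fintype J] [DecidableEq J]

lemma CAt_comp_le {f : (I → Bool) → Bool} {g : (J → Bool) → Bool} {x : I × J → Bool}
    {w : Finset I} (hw : IsCert f (fun i => g fun j => x (i, j)) w) :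
    CAt (comp f g) x ≤ ∑ i ∈ w, CAt g (fun j => x (i, j)) := by
  choose T hT hcard using fun i => exists_isCert_card_eq_CAt g (fun j => x (i, j))
  have hS : IsCert (comp f g) x (w.biUnion fun i => (T i).image (Prod.mk i)) :=
    isCert_iff.2 fun y hy => isCert_iff.1 hw _ fun i hi => isCert_iff.1 (hT i) _ fun j hj =>
      hy _ (Finset.mem_biUnion.2 ⟨i, hi, Finset.mem_image_of_mem _ hj⟩)
  calc CAt (comp f g) x ≤ _ := CAt_le_card hS
    _ ≤ ∑ i ∈ w, ((T i).image (Prod.mk i)).card := Finset.card_biUnion_le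
    _ ≤ ∑ i ∈ w, (T i).card := Finset.sum_le_sum fun i _ => Finset.card_image_le
    _ = _ := by simp only [hcard]

/-- The witness `w` consists of the rows on which the slice of a minimal certificate of `f ∘ g`
certifies `g`. -/
lemma exists_isCert_sum_CAt_le_CAt_comp (f : (I → Bool) → Bool) (g : (J → Bool) → Bool)
    (x : I × J → Bool) :
    ∃ w, IsCert f (fun i => g fun j => x (i, j)) w ∧
      ∑ i ∈ w, CAt g (fun j => x (i, j)) ≤ CAt (comp f g) x := by
  classical
  obtain ⟨S, hS, hcard⟩ := exists_isCert_card_eq_CAt (comp f g) x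
  set y : I → Bool := fun i => g fun j => x (i, j)
  set slice : I → Finset J := fun i => (S.filter (·.1 = i)).image Prod.snd
  have mem_slice {p : I × J} (hp : p ∈ S) : p.2 ∈ slice p.1 :=
    Finset.mem_image.2 ⟨p, Finset.mem_filter.2 ⟨hp, rfl⟩, rfl⟩
  refine ⟨Finset.univ.filter fun i => IsCert g (fun j => x (i, j)) (slice i), ?_, ?_⟩
  · intro B hB
    by_contra hwB
    have hflip : ∀ i, ∃ z : J → Bool, (∀ j ∈ slice i, z j = x (i, j)) ∧ g z = flipSet y B i := by
      intro i
      by_cases hi : i ∈ B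
      · have hnc : ¬ IsCert g (fun j => x (i, j)) (slice i) :=
          fun hc => hwB ⟨i, by simp [hi, hc]⟩
        simp only [isCert_iff, not_forall] at hnc
        obtain ⟨z, hz, hne⟩ := hnc
        exact ⟨z, hz, by simpa [flipSet, hi, y] using Bool.eq_not.2 hne⟩
      · exact ⟨fun j => x (i, j), fun _ _ => rfl, by simp [flipSet, hi, y]⟩
    choose z hz hzy using hflip
    apply hB
    calc f (flipSet y B) = comp f g (fun p => z p.1 p.2) := by simp only [comp, hzy]
      _ = f y := isCert_iff.1 hS _ fun p hp => hz p.1 p.2 (mem_slice hp)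
  · calc ∑ i ∈ _, CAt g (fun j => x (i, j))
        ≤ ∑ i ∈ Finset.univ.filter fun i => IsCert g (fun j => x (i, j)) (slice i),
            (slice i).card := Finset.sum_le_sum fun i hi => CAt_le_card (Finset.mem_filter.1 hi).2
      _ ≤ ∑ i, (slice i).card := Finset.sum_le_sum_of_subset (Finset.filter_subset _ _)
      _ ≤ ∑ i, (S.filter (·.1 = i)).card := Finset.sum_le_sum fun i _ => Finset.card_image_le
      _ = CAt (comp f g) x := by
        rw [← hcard, Finset.card_eq_sum_card_fiberwise fun p _ => Finset.mem_univ p.1]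

end Composition

section PerronRoot

open Matrix

noncomputable def perronRoot (M : Matrix Bool Bool ℝ) : ℝ :=
  (M false false + M true true +
    √((M false false - M true true) ^ 2 + 4 * (M false true * M true false))) / 2

lemma perronRoot_lt_iff {M : Matrix Bool Bool ℝ} (hbc : 0 ≤ M false true * M true false) {r : ℝ} :
    perronRoot M < r ↔ M false false < r ∧ M true true < r ∧
      M false true * M true false < (r - M false false) * (r - M true true) := by
  set a := M false false
  set d := M true true
  set bc := M false true * M true false
  have hD : 0 ≤ (a - d) ^ 2 + 4 * bc := by positivity
  have habs : |a - d| ≤ √((a - d) ^ 2 + 4 * bc) := Real.abs_le_sqrt (by linarith)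
  have hsq := Real.sq_sqrt hD
  have hs0 := Real.sqrt_nonneg ((a - d) ^ 2 + 4 * bc)
  rw [perronRoot]
  constructor
  · intro h
    have had := abs_le.1 habs
    exact ⟨by linarith, by linarith, by nlinarith⟩
  · rintro ⟨ha, hd, hbcr⟩
    have hlt : √((a - d) ^ 2 + 4 * bc) < 2 * r - a - d :=
      (Real.sqrt_lt' (by linarith)).2 (by nlinarith)
    linarith

lemma det_bool {R : Type*} [CommRing R] (A : Matrix Bool Bool R) :
    A.det = A false false * A true true - A false true * A true false := by
  rw [← det_reindex_self finTwoEquiv.symm A, det_fin_two]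
  simp [finTwoEquiv]

lemma mem_spectrum_map_ofReal_iff (M : Matrix Bool Bool ℝ) (μ : ℂ) :
    μ ∈ spectrum ℂ (M.map Complex.ofReal) ↔
      (μ - M false false) * (μ - M true true) - M false true * M true false = 0 := by
  rw [spectrum.mem_iff, isUnit_iff_isUnit_det, isUnit_iff_ne_zero, not_not, det_bool]
  simp [algebraMap_matrix_apply]

lemma specRad_eq_perronRoot {M : Matrix Bool Bool ℝ} (hM : ∀ s t, 0 ≤ M s t) :
    specRad M = perronRoot M := by
  set a := M false false
  set d := M true true
  set bc := M false true * M true false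
  set s := √((a - d) ^ 2 + 4 * bc)
  have hs2 : s ^ 2 = (a - d) ^ 2 + 4 * bc :=
    Real.sq_sqrt (by have := mul_nonneg (hM false true) (hM true false); positivity)
  have hs0 : 0 ≤ s := Real.sqrt_nonneg _
  have hspec : spectrum ℂ (M.map Complex.ofReal) =
      {(((a + d + s) / 2 : ℝ) : ℂ), (((a + d - s) / 2 : ℝ) : ℂ)} := by
    ext μ
    have hs2' : (s : ℂ) ^ 2 = (a - d) ^ 2 + 4 * bc := by exact_mod_cast hs2
    have hfactor : (μ - a) * (μ - d) - bc =
        (μ - ((a + d + s) / 2 : ℝ)) * (μ - ((a + d - s) / 2 : ℝ)) := by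
      push_cast; linear_combination (1 / 4 : ℂ) * hs2'
    rw [mem_spectrum_map_ofReal_iff, Set.mem_insert_iff, Set.mem_singleton_iff]
    simp only [bc] at hfactor
    push_cast at hfactor ⊢
    rw [hfactor, mul_eq_zero, sub_eq_zero, sub_eq_zero]
  have hset : {r | ∃ μ : ℂ, μ ∈ spectrum ℂ (M.map Complex.ofReal) ∧ r = ‖μ‖} =
      {|(a + d + s) / 2|, |(a + d - s) / 2|} := by
    ext r
    simp only [hspec, Set.mem_insert_iff, Set.mem_singleton_iff, exists_eq_or_imp, exists_eq_left,
      Complex.norm_real, Real.norm_eq_abs]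
    rfl
  have ha := hM false false
  have hd := hM true true
  rw [specRad, hset, csSup_pair, abs_of_nonneg (by positivity),
    max_eq_left (abs_le.2 ⟨by linarith, by linarith⟩)]
  rfl

lemma mulVec_bool (M : Matrix Bool Bool ℝ) (u : Bool → ℝ) (s : Bool) :
    (M *ᵥ u) s = M s false * u false + M s true * u true := by
  simp [mulVec, dotProduct, add_comm]

/-- Collatz–Wielandt bound from a positive strict super-eigenvector. -/
lemma specRad_lt_of_mulVec_lt {M : Matrix Bool Bool ℝ} (hM : ∀ s t, 0 ≤ M s t)
    {u : Bool → ℝ} (hu : ∀ s, 0 < u s) {r : ℝ} (h : ∀ s, (M *ᵥ u) s < r * u s) :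
    specRad M < r := by
  have h0 := h false
  have h1 := h true
  simp only [mulVec_bool] at h0 h1
  have hu0 := hu false
  have hu1 := hu true
  have hb := mul_nonneg (hM false true) hu1.le
  have hc := mul_nonneg (hM true false) hu0.le
  rw [specRad_eq_perronRoot hM]
  refine (perronRoot_lt_iff (mul_nonneg (hM _ _) (hM _ _))).2 ⟨by nlinarith, by nlinarith, ?_⟩
  have e0 : M false true * u true < (r - M false false) * u false := by linarith
  have e1 : M true false * u false < (r - M true true) * u true := by linarith
  nlinarith [mul_lt_mul'' e0 e1 hb hc, mul_pos hu0 hu1]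

/-- Collatz–Wielandt bound from a nonnegative sub-eigenvector. -/
lemma le_specRad_of_le_mulVec {M : Matrix Bool Bool ℝ} (hM : ∀ s t, 0 ≤ M s t)
    {u : Bool → ℝ} (hu : ∀ s, 0 ≤ u s) (hu0 : u ≠ 0) {r : ℝ} (h : ∀ s, r * u s ≤ (M *ᵥ u) s) :
    r ≤ specRad M := by
  rw [specRad_eq_perronRoot hM]
  by_contra! hlt
  obtain ⟨ha, hd, hbc⟩ := (perronRoot_lt_iff (mul_nonneg (hM _ _) (hM _ _))).1 hlt
  have h0 := h false
  have h1 := h true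
  simp only [mulVec_bool] at h0 h1
  have hb := hM false true
  have hc := hM true false
  have hu0' : u false ≤ 0 := by
    nlinarith [mul_le_mul_of_nonneg_left h1 hb, hu false, hu true]
  have hu1' : u true ≤ 0 := by
    nlinarith [mul_le_mul_of_nonneg_left h0 hc, hu false, hu true]
  exact hu0 (funext fun s => le_antisymm (by cases s <;> assumption) (hu s))

end PerronRoot

section WitnessRadii

variable {I : Type*} [Fintype I] [DecidableEq I] (f : (I → Bool) → Bool)

open Matrix in
lemma profile_mulVec (α : Bool → I → Bool) (w : Bool → Finset I) (u : Bool → ℝ) (s : Bool) :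
    (profile α w *ᵥ u) s = ∑ i ∈ w s, u (α s i) := by
  rw [mulVec, dotProduct, ← Finset.sum_fiberwise (w s) (α s) fun i => u (α s i)]
  refine Finset.sum_congr rfl fun t _ => ?_
  rw [Finset.sum_congr rfl fun i hi => congrArg u (Finset.mem_filter.1 hi).2, Finset.sum_const,
    nsmul_eq_mul]
  rfl

lemma profile_nonneg (α : Bool → I → Bool) (w : Bool → Finset I) (s t : Bool) :
    0 ≤ profile α w s t :=
  Nat.cast_nonneg _

def witnessRadii (α : Bool → I → Bool) : Set ℝ :=
  {s | ∃ w : Bool → Finset I, (∀ b, IsCert f (α b) (w b)) ∧ s = specRad (profile α w)}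

lemma witnessRadii_finite (α : Bool → I → Bool) : (witnessRadii f α).Finite :=
  (Set.finite_range fun w => specRad (profile α w)).subset fun _ ⟨w, _, hw⟩ => ⟨w, hw.symm⟩

lemma sInf_witnessRadii_le {α : Bool → I → Bool} {w : Bool → Finset I}
    (hw : ∀ b, IsCert f (α b) (w b)) : sInf (witnessRadii f α) ≤ specRad (profile α w) :=
  csInf_le (witnessRadii_finite f α).bddBelow ⟨w, hw, rfl⟩

lemma le_sInf_witnessRadii {α : Bool → I → Bool} {r : ℝ}
    (h : ∀ w : Bool → Finset I, (∀ b, IsCert f (α b) (w b)) → r ≤ specRad (profile α w)) :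
    r ≤ sInf (witnessRadii f α) :=
  le_csInf ⟨_, fun _ => Finset.univ, fun b => isCert_univ f (α b), rfl⟩
    fun _ ⟨w, hw, hs⟩ => hs ▸ h w hw

lemma finite_selectorRadii :
    {r | ∃ α : Bool → I → Bool, f (α false) = false ∧ f (α true) = true ∧
      r = sInf (witnessRadii f α)}.Finite :=
  (Set.finite_range fun α => sInf (witnessRadii f α)).subset fun _ ⟨α, _, _, hα⟩ => ⟨α, hα.symm⟩

lemma sInf_witnessRadii_le_hatC {α : Bool → I → Bool} (hα : ∀ b, f (α b) = b) :
    sInf (witnessRadii f α) ≤ hatC f :=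
  le_csSup (finite_selectorRadii f).bddAbove ⟨α, hα false, hα true, rfl⟩

lemma exists_hatC_eq_sInf_witnessRadii (hf0 : ∃ x, f x = false) (hf1 : ∃ x, f x = true) :
    ∃ α : Bool → I → Bool, (∀ b, f (α b) = b) ∧ hatC f = sInf (witnessRadii f α) := by
  obtain ⟨x0, hx0⟩ := hf0
  obtain ⟨x1, hx1⟩ := hf1
  have hne : {r | ∃ α : Bool → I → Bool, f (α false) = false ∧ f (α true) = true ∧
      r = sInf (witnessRadii f α)}.Nonempty :=
    ⟨_, fun b => if b then x1 else x0, by simpa using hx0, by simpa using hx1, rfl⟩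
  obtain ⟨α, h0, h1, hα⟩ := hne.csSup_mem (finite_selectorRadii f)
  exact ⟨α, Bool.forall_bool.2 ⟨h0, h1⟩, hα⟩

lemma hatC_nonneg : 0 ≤ hatC f :=
  Real.sSup_nonneg fun _ ⟨_, _, _, hr⟩ => hr ▸ Real.sInf_nonneg fun _ ⟨_, _, hs⟩ =>
    hs ▸ Real.sSup_nonneg fun _ ⟨_, _, hμ⟩ => hμ ▸ norm_nonneg _

end WitnessRadii

section SimplexPt

def simplexPt (t : ℝ) (b : Bool) : ℝ := if b then t else 1 - t

@[simp] lemma simplexPt_false (t : ℝ) : simplexPt t false = 1 - t := rfl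

@[simp] lemma simplexPt_true (t : ℝ) : simplexPt t true = t := rfl

lemma continuous_simplexPt (b : Bool) : Continuous fun t => simplexPt t b := by
  cases b <;> simp only [simplexPt_false, simplexPt_true] <;> fun_prop

lemma simplexPt_nonneg {t : ℝ} (ht : t ∈ Set.Icc 0 1) (b : Bool) : 0 ≤ simplexPt t b := by
  cases b <;> simp <;> linarith [ht.1, ht.2]

lemma simplexPt_le_one {t : ℝ} (ht : t ∈ Set.Icc 0 1) (b : Bool) : simplexPt t b ≤ 1 := by
  cases b <;> simp <;> linarith [ht.1, ht.2]

lemma min_le_simplexPt (t : ℝ) (b : Bool) : min t (1 - t) ≤ simplexPt t b := by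
  cases b
  · exact min_le_right _ _
  · exact min_le_left _ _

lemma simplexPt_ne_zero (t : ℝ) : simplexPt t ≠ 0 := fun h => by
  have h0 := congrFun h false
  have h1 := congrFun h true
  simp only [simplexPt_false, simplexPt_true, Pi.zero_apply] at h0 h1
  linarith

end SimplexPt

section Heavy

variable {I : Type*} [DecidableEq I] {f : (I → Bool) → Bool}

def IsHeavy (f : (I → Bool) → Bool) (u : Bool → ℝ) (r : ℝ) (y : I → Bool) : Prop :=
  ∀ S, IsCert f y S → r * u (f y) ≤ ∑ i ∈ S, u (y i)

lemma isHeavy_of_eq_zero {u : Bool → ℝ} (hu : ∀ b, 0 ≤ u b) (r : ℝ) {y : I → Bool}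
    (hy : u (f y) = 0) : IsHeavy f u r y := fun _ _ => by
  rw [hy, mul_zero]
  exact Finset.sum_nonneg fun i _ => hu _

lemma isClosed_setOf_isHeavy (r : ℝ) (y : I → Bool) :
    IsClosed {t | IsHeavy f (simplexPt t) r y} := by
  simp only [IsHeavy, Set.ofPred_forall]
  exact isClosed_iInter fun S => isClosed_iInter fun _ => isClosed_le
    ((continuous_simplexPt _).const_mul r)
    (continuous_finsetSum _ fun i _ => continuous_simplexPt _)

variable [Fintype I]

lemma le_hatC_of_isHeavy {α : Bool → I → Bool} (hα : ∀ b, f (α b) = b) {u : Bool → ℝ}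
    (hu : ∀ b, 0 ≤ u b) (hu0 : u ≠ 0) {r : ℝ} (h : ∀ b, IsHeavy f u r (α b)) : r ≤ hatC f := by
  refine (le_sInf_witnessRadii f fun w hw => ?_).trans (sInf_witnessRadii_le_hatC f hα)
  refine le_specRad_of_le_mulVec (profile_nonneg α w) hu hu0 fun b => ?_
  rw [profile_mulVec]
  simpa only [hα b] using h b (w b) (hw b)

lemma exists_isHeavy_hatC (hf0 : ∃ x, f x = false) (hf1 : ∃ x, f x = true) :
    ∃ α : Bool → I → Bool, (∀ b, f (α b) = b) ∧
      ∃ t ∈ Set.Icc (0 : ℝ) 1, ∀ b, IsHeavy f (simplexPt t) (hatC f) (α b) := by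
  obtain ⟨α, hα, hC⟩ := exists_hatC_eq_sInf_witnessRadii f hf0 hf1
  refine ⟨α, hα, ?_⟩
  set T : Bool → Set ℝ := fun b => {t | IsHeavy f (simplexPt t) (hatC f) (α b)}
  have hT1 : (1 : ℝ) ∈ T false :=
    isHeavy_of_eq_zero (simplexPt_nonneg ⟨zero_le_one, le_rfl⟩) _ (by simp [hα])
  have hT0 : (0 : ℝ) ∈ T true :=
    isHeavy_of_eq_zero (simplexPt_nonneg ⟨le_rfl, zero_le_one⟩) _ (by simp [hα])
  obtain ⟨t, ht, hF, hT⟩ | ⟨t, ht, htT⟩ := exists_Icc_mem_inter_or_Ioo_notMem_union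
    (isClosed_setOf_isHeavy _ _) (isClosed_setOf_isHeavy _ _) hT1 hT0
  · exact ⟨t, ht, Bool.forall_bool.2 ⟨hF, hT⟩⟩
  have hlight : ∀ b, ∃ S, IsCert f (α b) S ∧
      ∑ i ∈ S, simplexPt t (α b i) < hatC f * simplexPt t b := by
    intro b
    have hb : t ∉ T b := fun h => htT (by cases b; exacts [.inl h, .inr h])
    simpa [T, IsHeavy, hα] using hb
  choose w hw hwt using hlight
  have hlt : specRad (profile α w) < hatC f :=
    specRad_lt_of_mulVec_lt (profile_nonneg α w)
      (fun b => (lt_min ht.1 (sub_pos.2 ht.2)).trans_le (min_le_simplexPt t b))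
      fun b => by rw [profile_mulVec]; exact hwt b
  exact absurd (hC ▸ sInf_witnessRadii_le f hw) hlt.not_ge

lemma exists_forall_not_isHeavy (hf0 : ∃ x, f x = false) (hf1 : ∃ x, f x = true) {r : ℝ}
    (hr : hatC f < r) : ∃ t ∈ Set.Ioo (0 : ℝ) 1, ∀ y, ¬ IsHeavy f (simplexPt t) r y := by
  obtain ⟨x0, hx0⟩ := hf0
  obtain ⟨x1, hx1⟩ := hf1
  set V : Bool → Set ℝ := fun b => {t | ∃ y, f y = b ∧ IsHeavy f (simplexPt t) r y}
  have hV : ∀ b, IsClosed (V b) := fun b => by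
    simp only [V, Set.ofPred_exists, Set.ofPred_and]
    exact isClosed_iUnion_of_finite fun y => isClosed_const.inter (isClosed_setOf_isHeavy r y)
  have hV1 : (1 : ℝ) ∈ V false :=
    ⟨x0, hx0, isHeavy_of_eq_zero (simplexPt_nonneg ⟨zero_le_one, le_rfl⟩) _ (by simp [hx0])⟩
  have hV0 : (0 : ℝ) ∈ V true :=
    ⟨x1, hx1, isHeavy_of_eq_zero (simplexPt_nonneg ⟨le_rfl, zero_le_one⟩) _ (by simp [hx1])⟩
  obtain ⟨t, ht, ⟨y0, hy0, h0⟩, ⟨y1, hy1, h1⟩⟩ | ⟨t, ht, htV⟩ :=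
    exists_Icc_mem_inter_or_Ioo_notMem_union (hV false) (hV true) hV1 hV0
  · have hα : ∀ b, f (if b then y1 else y0) = b := Bool.forall_bool.2 ⟨hy0, hy1⟩
    exact absurd (le_hatC_of_isHeavy hα (simplexPt_nonneg ht) (simplexPt_ne_zero t)
      (Bool.forall_bool.2 ⟨h0, h1⟩)) hr.not_ge
  refine ⟨t, ht, fun y hy => htV ?_⟩
  cases hfy : f y
  · exact .inl ⟨y, hfy, hy⟩
  · exact .inr ⟨y, hfy, hy⟩

end Heavy

section Iteration

variable {n : ℕ} (f : (Fin n → Bool) → Bool)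

lemma iter_succ_comp (k : ℕ) (z : Fin n × (Fin k → Fin n) → Bool) :
    iter f (k + 1) (z ∘ (Fin.consEquiv fun _ => Fin n).symm) = comp f (iter f k) z :=
  rfl

lemma CAt_iter_succ_comp (k : ℕ) (z : Fin n × (Fin k → Fin n) → Bool) :
    CAt (iter f (k + 1)) (z ∘ (Fin.consEquiv fun _ => Fin n).symm) = CAt (comp f (iter f k)) z :=
  CAt_reindex (Fin.consEquiv fun _ => Fin n).symm (comp f (iter f k)) z

lemma CAt_iter_zero (x : (Fin 0 → Fin n) → Bool) : CAt (iter f 0) x = 1 := by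
  refine le_antisymm ?_ (one_le_CAt ⟨fun s => !x s, by simp [iter]⟩)
  simpa using CAt_le_card (isCert_univ (iter f 0) x)

variable {f}

lemma mul_CAt_iter_le {u : Bool → ℝ} {m r : ℝ} (hm : ∀ b, m ≤ u b) (hm0 : 0 ≤ m) (hr : 0 ≤ r)
    (hu : ∀ y, ∃ S, IsCert f y S ∧ ∑ i ∈ S, u (y i) ≤ r * u (f y)) :
    ∀ k x, m * CAt (iter f k) x ≤ r ^ k * u (iter f k x)
  | 0, x => by simpa [CAt_iter_zero] using hm _
  | k + 1, x => by
    obtain ⟨z, rfl⟩ : ∃ z, x = z ∘ (Fin.consEquiv fun _ => Fin n).symm :=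
      ⟨x ∘ Fin.consEquiv fun _ => Fin n, by
        rw [Function.comp_assoc, Equiv.self_comp_symm, Function.comp_id]⟩
    obtain ⟨S, hS, hSu⟩ := hu fun i => iter f k fun s => z (i, s)
    rw [CAt_iter_succ_comp, iter_succ_comp]
    calc m * CAt (comp f (iter f k)) z
        ≤ m * ∑ i ∈ S, (CAt (iter f k) fun s => z (i, s) : ℝ) :=
        mul_le_mul_of_nonneg_left (by exact_mod_cast CAt_comp_le hS) hm0
      _ = ∑ i ∈ S, m * CAt (iter f k) fun s => z (i, s) := Finset.mul_sum _ _ _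
      _ ≤ ∑ i ∈ S, r ^ k * u (iter f k fun s => z (i, s)) :=
        Finset.sum_le_sum fun i _ => mul_CAt_iter_le hm hm0 hr hu k _
      _ ≤ r ^ k * (r * u (comp f (iter f k) z)) := by
        rw [← Finset.mul_sum]; exact mul_le_mul_of_nonneg_left hSu (pow_nonneg hr k)
      _ = r ^ (k + 1) * u (comp f (iter f k) z) := by ring

/-- Hard inputs of `f^(k+1)` are obtained by plugging hard inputs of `f^(k)` into `α b`. -/
lemma exists_iter_eq_and_le_CAt {α : Bool → Fin n → Bool} {u : Bool → ℝ} {r : ℝ}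
    (hα : ∀ b, f (α b) = b) (hu1 : ∀ b, u b ≤ 1) (hr : 0 ≤ r)
    (hu : ∀ b, IsHeavy f u r (α b)) :
    ∀ k b, ∃ x, iter f k x = b ∧ r ^ k * u b ≤ CAt (iter f k) x
  | 0, b => ⟨fun _ => b, rfl, by simpa [CAt_iter_zero] using hu1 b⟩
  | k + 1, b => by
    choose x hx hxC using exists_iter_eq_and_le_CAt hα hu1 hr hu k
    set z : Fin n × (Fin k → Fin n) → Bool := fun p => x (α b p.1) p.2
    have htop : (fun i => iter f k fun s => z (i, s)) = α b := funext fun i => hx (α b i)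
    obtain ⟨S, hS, hSC⟩ := exists_isCert_sum_CAt_le_CAt_comp f (iter f k) z
    rw [htop] at hS
    have hSu : r * u b ≤ ∑ i ∈ S, u (α b i) := by simpa only [hα b] using hu b S hS
    refine ⟨z ∘ (Fin.consEquiv fun _ => Fin n).symm, ?_, ?_⟩
    · rw [iter_succ_comp, comp, htop, hα]
    rw [CAt_iter_succ_comp]
    calc r ^ (k + 1) * u b = r ^ k * (r * u b) := by ring
      _ ≤ r ^ k * ∑ i ∈ S, u (α b i) := mul_le_mul_of_nonneg_left hSu (pow_nonneg hr k)
      _ = ∑ i ∈ S, r ^ k * u (α b i) := Finset.mul_sum _ _ _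
      _ ≤ ∑ i ∈ S, (CAt (iter f k) (x (α b i)) : ℝ) := Finset.sum_le_sum fun i _ => hxC _
      _ ≤ CAt (comp f (iter f k)) z := by exact_mod_cast hSC

end Iteration

section Growth

variable {n : ℕ} {f : (Fin n → Bool) → Bool}

lemma half_mul_pow_hatC_le_Cm_iter (hf0 : ∃ x, f x = false) (hf1 : ∃ x, f x = true) (k : ℕ) :
    1 / 2 * hatC f ^ k ≤ Cm (iter f k) := by
  obtain ⟨α, hα, t, ht, hheavy⟩ := exists_isHeavy_hatC hf0 hf1
  have hard := exists_iter_eq_and_le_CAt hα (simplexPt_le_one ht) (hatC_nonneg f) hheavy k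
  obtain ⟨x0, -, h0⟩ := hard false
  obtain ⟨x1, -, h1⟩ := hard true
  have hC0 : (CAt (iter f k) x0 : ℝ) ≤ Cm (iter f k) := by exact_mod_cast CAt_le_Cm _ _
  have hC1 : (CAt (iter f k) x1 : ℝ) ≤ Cm (iter f k) := by exact_mod_cast CAt_le_Cm _ _
  simp only [simplexPt_false, simplexPt_true] at h0 h1
  linarith

lemma exists_Cm_iter_le_mul_pow (hf0 : ∃ x, f x = false) (hf1 : ∃ x, f x = true) {r : ℝ}
    (hr : hatC f < r) : ∃ K, ∀ k, (Cm (iter f k) : ℝ) ≤ K * r ^ k := by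
  obtain ⟨t, ht, hlight⟩ := exists_forall_not_isHeavy hf0 hf1 hr
  have hm : 0 < min t (1 - t) := lt_min ht.1 (sub_pos.2 ht.2)
  have hcert : ∀ y, ∃ S, IsCert f y S ∧ ∑ i ∈ S, simplexPt t (y i) ≤ r * simplexPt t (f y) := by
    intro y
    have hy := hlight y
    simp only [IsHeavy, not_forall, not_le, exists_prop] at hy
    obtain ⟨S, hS, hlt⟩ := hy
    exact ⟨S, hS, hlt.le⟩
  refine ⟨(min t (1 - t))⁻¹, fun k => ?_⟩
  obtain ⟨x, hx⟩ := exists_CAt_eq_Cm (iter f k)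
  have := mul_CAt_iter_le (min_le_simplexPt t) hm.le ((hatC_nonneg f).trans hr.le) hcert k x
  rw [hx, inv_mul_eq_div, le_div_iff₀ hm, mul_comm]
  exact this.trans (mul_le_of_le_one_right (pow_nonneg ((hatC_nonneg f).trans hr.le) k)
    (simplexPt_le_one (Set.Ioo_subset_Icc_self ht) _))

end Growth

end BS

open Filter BS in
/-- For any non-constant boolean function `f` on `n` variables,
`liminf C(f^(k))^(1/k) = Ĉ(f)`. -/
theorem C_lim_eq_hatC {n : ℕ} (f : (Fin n → Bool) → Bool)
    (hf0 : ∃ x, f x = false) (hf1 : ∃ x, f x = true) :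
    Filter.liminf (fun k : ℕ => (Cm (iter f k) : ℝ) ^ (1 / (k : ℝ))) Filter.atTop =
      hatC f :=
  (tendsto_rpow_one_div_of_pow_bounds (hatC_nonneg f) one_half_pos
    (half_mul_pow_hatC_le_Cm_iter hf0 hf1)
    fun _ hr => exists_Cm_iter_le_mul_pow hf0 hf1 hr).liminf_eq
end

section
/- Let M_1, …, M_k be 2×2 matrices with nonnegative real entries and let M := M_1 M_2 ⋯ M_k. For i, j ∈ [k], let M_{i,j} denote the 2×2 matrix whose first row is the first row of M_i and whose second row is the second row of M_j. If λ ≥ 0 and ρ(M_{i,j}) ≥ λ for all i, j ∈ [k], then ρ(M) ≥ λ^k. -/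
/-! For a nonnegative 2×2 matrix `A` and `v = (1 - s, s)` with `s ∈ [0, 1]`, the Collatz–Wielandt
characterisation reads: `λ ≤ ρ(A)` iff `λ v ≤ A v` for some `s`. The first coordinate of
`λ v ≤ A v` involves only the first row of `A` and holds on an up-set of `s`; the second involves
only the second row and holds on a down-set. The hypothesis on the mixed matrices says that each
of the up-sets coming from the `M i` meets each of the down-sets coming from the `M j`; in a
linear order this gives a common point `s`. Then `λ v ≤ M i v` for all `i`, so
`λ ^ k v ≤ M v` by monotonicity of nonnegative matrices, and `λ ^ k ≤ ρ(M)`. -/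

open Filter

open Matrix unitInterval

theorem exists_forall_mem_of_isUpperSet_of_isLowerSet {α ι : Type*} [LinearOrder α] [Nonempty α]
    [Finite ι] {S T : ι → Set α} (hS : ∀ i, IsUpperSet (S i)) (hT : ∀ i, IsLowerSet (T i))
    (hST : ∀ i j, (S i ∩ T j).Nonempty) : ∃ x, (∀ i, x ∈ S i) ∧ ∀ j, x ∈ T j := by
  rcases isEmpty_or_nonempty ι with hι | hι
  · obtain ⟨x⟩ := ‹Nonempty α›
    exact ⟨x, isEmptyElim, isEmptyElim⟩
  have := Fintype.ofFinite ι
  choose t ht using hST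
  -- a max–min of the witnesses lies above some witness of each `S i` and below one of each `T j`
  let m i := Finset.univ.inf' Finset.univ_nonempty (t i)
  let x := Finset.univ.sup' Finset.univ_nonempty m
  refine ⟨x, fun i => ?_, fun j => ?_⟩
  · obtain ⟨j, -, hj⟩ := Finset.exists_mem_eq_inf' Finset.univ_nonempty (t i)
    have hmi : m i = t i j := hj
    exact hS i (hmi ▸ Finset.le_sup' m (Finset.mem_univ i)) (ht i j).1
  · obtain ⟨i, -, hi⟩ := Finset.exists_mem_eq_sup' Finset.univ_nonempty m
    have hxi : x = m i := hi
    exact hT j (hxi ▸ Finset.inf'_le (t i) (Finset.mem_univ j)) (ht i j).2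

theorem Matrix.mulVec_mono_of_nonneg {m n R : Type*} [Fintype n] [Semiring R] [PartialOrder R]
    [IsOrderedRing R] {A : Matrix m n R} (hA : ∀ i j, 0 ≤ A i j) {v w : n → R} (hvw : v ≤ w) :
    A *ᵥ v ≤ A *ᵥ w := fun i =>
  Finset.sum_le_sum fun j _ => mul_le_mul_of_nonneg_left (hvw j) (hA i j)

theorem Matrix.list_prod_nonneg {n R : Type*} [Fintype n] [DecidableEq n] [Semiring R]
    [PartialOrder R] [IsOrderedRing R] (L : List (Matrix n n R))
    (hL : ∀ A ∈ L, ∀ i j, 0 ≤ A i j) : ∀ i j, 0 ≤ L.prod i j := by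
  induction L with
  | nil => intro i j; rw [List.prod_nil, one_apply]; split_ifs <;> simp
  | cons A L ih =>
    intro i j
    rw [List.prod_cons, mul_apply]
    have hP := ih fun B hB => hL B (List.mem_cons_of_mem A hB)
    exact Finset.sum_nonneg fun k _ => mul_nonneg (hL A List.mem_cons_self i k) (hP k j)

theorem Matrix.pow_length_smul_le_list_prod_mulVec {n R : Type*} [Fintype n] [DecidableEq n]
    [CommSemiring R] [PartialOrder R] [IsOrderedRing R] {l : R} (hl : 0 ≤ l) {v : n → R}
    (L : List (Matrix n n R)) (hL : ∀ A ∈ L, (∀ i j, 0 ≤ A i j) ∧ l • v ≤ A *ᵥ v) :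
    l ^ L.length • v ≤ L.prod *ᵥ v := by
  induction L with
  | nil => simp
  | cons A L ih =>
    obtain ⟨hA, hAv⟩ := hL A List.mem_cons_self
    calc l ^ (A :: L).length • v = l ^ L.length • l • v := by
          rw [List.length_cons, pow_succ, mul_smul]
      _ ≤ l ^ L.length • (A *ᵥ v) := smul_le_smul_of_nonneg_left hAv (pow_nonneg hl _)
      _ = A *ᵥ (l ^ L.length • v) := (mulVec_smul A _ v).symm
      _ ≤ A *ᵥ (L.prod *ᵥ v) :=
          mulVec_mono_of_nonneg hA (ih fun B hB => hL B (List.mem_cons_of_mem A hB))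
      _ = (A :: L).prod *ᵥ v := by rw [List.prod_cons, mulVec_mulVec]

def simplexVec (s : unitInterval) : Fin 2 → ℝ := ![1 - s, s]

namespace Matrix

noncomputable def perronRoot (A : Matrix (Fin 2) (Fin 2) ℝ) : ℝ :=
  (A 0 0 + A 1 1 + √((A 0 0 - A 1 1) ^ 2 + 4 * (A 0 1 * A 1 0))) / 2

variable {A : Matrix (Fin 2) (Fin 2) ℝ}

theorem mem_spectrum_map_ofReal_iff_fin_two (μ : ℂ) :
    μ ∈ spectrum ℂ (A.map Complex.ofReal) ↔ (μ - A 0 0) * (μ - A 1 1) = A 0 1 * A 1 0 := by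
  rw [spectrum.mem_iff, isUnit_iff_isUnit_det, isUnit_iff_ne_zero, not_not, det_fin_two,
    sub_eq_zero]
  simp [algebraMap_matrix_apply]

theorem smul_le_mulVec_iff_fin_two {l : ℝ} {v : Fin 2 → ℝ} :
    l • v ≤ A *ᵥ v ↔ l * v 0 ≤ A 0 ⬝ᵥ v ∧ l * v 1 ≤ A 1 ⬝ᵥ v :=
  Fin.forall_fin_two

theorem perronRoot_sub_mul_perronRoot_sub (hA : ∀ i j, 0 ≤ A i j) :
    (perronRoot A - A 0 0) * (perronRoot A - A 1 1) = A 0 1 * A 1 0 := by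
  have := Real.sq_sqrt (by positivity [hA 0 1, hA 1 0] :
    0 ≤ (A 0 0 - A 1 1) ^ 2 + 4 * (A 0 1 * A 1 0))
  unfold perronRoot
  linear_combination this / 4

theorem diag_le_perronRoot (hA : ∀ i j, 0 ≤ A i j) :
    A 0 0 ≤ perronRoot A ∧ A 1 1 ≤ perronRoot A := by
  have h : |A 0 0 - A 1 1| ≤ √((A 0 0 - A 1 1) ^ 2 + 4 * (A 0 1 * A 1 0)) :=
    Real.abs_le_sqrt (by nlinarith [mul_nonneg (hA 0 1) (hA 1 0)])
  rw [abs_le] at h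
  constructor <;> (unfold perronRoot; linarith)

theorem norm_le_perronRoot (hA : ∀ i j, 0 ≤ A i j) {μ : ℂ}
    (hμ : μ ∈ spectrum ℂ (A.map Complex.ofReal)) : ‖μ‖ ≤ perronRoot A := by
  obtain ⟨ha, hd⟩ := diag_le_perronRoot hA
  have hp : 0 ≤ perronRoot A := (hA 0 0).trans ha
  -- `A 0 0 + A 1 1 - perronRoot A` is the other eigenvalue
  have hq : |A 0 0 + A 1 1 - perronRoot A| ≤ perronRoot A :=
    abs_le.2 ⟨by linarith [hA 0 0, hA 1 1], by linarith⟩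
  have hroot := congrArg Complex.ofReal (perronRoot_sub_mul_perronRoot_sub hA)
  rw [mem_spectrum_map_ofReal_iff_fin_two] at hμ
  have : (μ - perronRoot A) * (μ - (A 0 0 + A 1 1 - perronRoot A : ℝ)) = 0 := by
    push_cast at hroot ⊢
    linear_combination hμ - hroot
  rcases mul_eq_zero.1 this with h | h <;>
    rw [sub_eq_zero.1 h, Complex.norm_real, Real.norm_eq_abs]
  exacts [(abs_of_nonneg hp).le, hq]

theorem specRad_eq_perronRoot (hA : ∀ i j, 0 ≤ A i j) : BS.specRad A = perronRoot A := by
  refine IsGreatest.csSup_eq ⟨⟨perronRoot A, ?_, ?_⟩, ?_⟩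
  · rw [mem_spectrum_map_ofReal_iff_fin_two]
    exact_mod_cast perronRoot_sub_mul_perronRoot_sub hA
  · rw [Complex.norm_real, Real.norm_of_nonneg ((hA 0 0).trans (diag_le_perronRoot hA).1)]
  · rintro _ ⟨μ, hμ, rfl⟩
    exact norm_le_perronRoot hA hμ

theorem exists_smul_le_mulVec_simplexVec_of_le_perronRoot (hA : ∀ i j, 0 ≤ A i j) {l : ℝ}
    (hl : l ≤ perronRoot A) : ∃ s, l • simplexVec s ≤ A *ᵥ simplexVec s := by
  simp only [smul_le_mulVec_iff_fin_two, simplexVec, dotProduct, Fin.sum_univ_two,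
    cons_val_zero, cons_val_one]
  obtain ⟨ha, hd⟩ := diag_le_perronRoot hA
  have hroot := perronRoot_sub_mul_perronRoot_sub hA
  rcases (hA 0 1).eq_or_lt with hb | hb
  · rw [← hb, zero_mul, mul_eq_zero, sub_eq_zero, sub_eq_zero] at hroot
    rcases hroot with hp | hp
    · refine ⟨0, ?_, ?_⟩ <;> simp <;> linarith [hA 1 0]
    · refine ⟨1, ?_, ?_⟩ <;> simp <;> linarith
  · -- the Perron eigenvector `(A 0 1, perronRoot A - A 0 0)`, normalized
    have hD : 0 < A 0 1 + (perronRoot A - A 0 0) := by linarith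
    refine ⟨⟨(perronRoot A - A 0 0) / (A 0 1 + (perronRoot A - A 0 0)),
      div_mem (by linarith) hD.le (by linarith)⟩, ?_, ?_⟩ <;>
      field_simp <;> nlinarith

theorem le_perronRoot_of_smul_le_mulVec_simplexVec (hA : ∀ i j, 0 ≤ A i j) {l : ℝ}
    {s : unitInterval} (h : l • simplexVec s ≤ A *ᵥ simplexVec s) : l ≤ perronRoot A := by
  simp only [smul_le_mulVec_iff_fin_two, simplexVec, dotProduct, Fin.sum_univ_two,
    cons_val_zero, cons_val_one] at h
  obtain ⟨ha, hd⟩ := diag_le_perronRoot hA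
  have hroot := perronRoot_sub_mul_perronRoot_sub hA
  by_contra! hlt
  have e1 : (l - A 0 0) * (1 - s) ≤ A 0 1 * s := by linarith [h.1]
  have e2 : (l - A 1 1) * s ≤ A 1 0 * (1 - s) := by linarith [h.2]
  -- `l` exceeds the larger root of `(x - A 0 0) * (x - A 1 1) - A 0 1 * A 1 0`
  have hgt : A 0 1 * A 1 0 < (l - A 0 0) * (l - A 1 1) :=
    hroot ▸ mul_lt_mul'' (by linarith) (by linarith) (by linarith) (by linarith)
  -- multiplying `e1` by `l - A 1 1` and `e2` by `A 0 1` chains them into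
  -- `(l - A 0 0) * (l - A 1 1) * (1 - s) ≤ A 0 1 * A 1 0 * (1 - s)`
  have hs : 1 - (s : ℝ) ≤ 0 := by
    nlinarith [mul_le_mul_of_nonneg_left e2 (hA 0 1),
      mul_le_mul_of_nonneg_left e1 (by linarith : 0 ≤ l - A 1 1), one_minus_nonneg s]
  have hs1 : (s : ℝ) = 1 := le_antisymm (le_one s) (by linarith)
  rw [hs1] at e2
  linarith

theorem le_specRad_iff_exists_smul_le_mulVec_simplexVec (hA : ∀ i j, 0 ≤ A i j) {l : ℝ} :
    l ≤ BS.specRad A ↔ ∃ s, l • simplexVec s ≤ A *ᵥ simplexVec s := by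
  rw [specRad_eq_perronRoot hA]
  exact ⟨exists_smul_le_mulVec_simplexVec_of_le_perronRoot hA,
    fun ⟨s, hs⟩ => le_perronRoot_of_smul_le_mulVec_simplexVec hA hs⟩

end Matrix

def subinvRowSet (l : ℝ) (r : Fin 2 → ℝ) (p : Fin 2) : Set unitInterval :=
  {s | l * simplexVec s p ≤ r ⬝ᵥ simplexVec s}

theorem smul_le_mulVec_simplexVec_iff {A : Matrix (Fin 2) (Fin 2) ℝ} {l : ℝ}
    {s : unitInterval} : l • simplexVec s ≤ A *ᵥ simplexVec s ↔
      s ∈ subinvRowSet l (A 0) 0 ∩ subinvRowSet l (A 1) 1 :=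
  smul_le_mulVec_iff_fin_two

theorem isUpperSet_subinvRowSet_zero {l : ℝ} {r : Fin 2 → ℝ} (hr : 0 ≤ r 1) :
    IsUpperSet (subinvRowSet l r 0) := by
  intro s t hst hs
  simp only [subinvRowSet, Set.mem_ofPred_eq, simplexVec, dotProduct, Fin.sum_univ_two,
    cons_val_zero, cons_val_one] at hs ⊢
  have hst : (s : ℝ) ≤ t := hst
  -- the defect is affine in `s`, and it is nonnegative at `s` and at `1`
  have hcomb : 0 ≤ (1 - s) * (r 0 * (1 - t) + r 1 * t - l * (1 - t)) := by
    nlinarith [mul_nonneg (one_minus_nonneg t) (sub_nonneg.2 hs),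
      mul_nonneg (sub_nonneg.2 hst) hr]
  rcases (one_minus_nonneg s).eq_or_lt with hs1 | hs1
  · have ht1 : (t : ℝ) = 1 := le_antisymm (le_one t) (by linarith)
    rw [ht1]
    linarith
  · linarith [nonneg_of_mul_nonneg_right hcomb hs1]

theorem isLowerSet_subinvRowSet_one {l : ℝ} {r : Fin 2 → ℝ} (hr : 0 ≤ r 0) :
    IsLowerSet (subinvRowSet l r 1) := by
  intro s t hts hs
  simp only [subinvRowSet, Set.mem_ofPred_eq, simplexVec, dotProduct, Fin.sum_univ_two,
    cons_val_zero, cons_val_one] at hs ⊢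
  have hts : (t : ℝ) ≤ s := hts
  have hcomb : 0 ≤ s * (r 0 * (1 - t) + r 1 * t - l * t) := by
    nlinarith [mul_nonneg (nonneg t) (sub_nonneg.2 hs), mul_nonneg (sub_nonneg.2 hts) hr]
  rcases (nonneg s).eq_or_lt with hs0 | hs0
  · have ht0 : (t : ℝ) = 0 := le_antisymm (by linarith) (nonneg t)
    rw [ht0]
    linarith
  · linarith [nonneg_of_mul_nonneg_right hcomb hs0]

open BS in
/-- Let `M 0, …, M (k-1)` be 2×2 nonnegative real matrices and
`P` their product (in order).  If the "mixed" matrices, whose first row is the first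
row of `M i` and second row is the second row of `M j`, all have spectral radius at
least `lam ≥ 0`, then `ρ(P) ≥ lam ^ k`. -/
theorem specRad_prod_ge {k : ℕ} (M : Fin k → Matrix (Fin 2) (Fin 2) ℝ) (lam : ℝ)
    (hlam : 0 ≤ lam)
    (hnonneg : ∀ i s t, 0 ≤ M i s t)
    (hmix : ∀ i j : Fin k, lam ≤ specRad (Matrix.of ![M i 0, M j 1])) :
    lam ^ k ≤ specRad (List.ofFn M).prod := by
  have hrows : ∀ i j, (subinvRowSet lam (M i 0) 0 ∩ subinvRowSet lam (M j 1) 1).Nonempty := by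
    intro i j
    have hX : ∀ s t, 0 ≤ Matrix.of ![M i 0, M j 1] s t := by
      intro s t; fin_cases s <;> exact hnonneg _ _ t
    obtain ⟨s, hs⟩ := (le_specRad_iff_exists_smul_le_mulVec_simplexVec hX).1 (hmix i j)
    exact ⟨s, smul_le_mulVec_simplexVec_iff.1 hs⟩
  obtain ⟨s, hs0, hs1⟩ := exists_forall_mem_of_isUpperSet_of_isLowerSet
    (fun i => isUpperSet_subinvRowSet_zero (hnonneg i 0 1))
    (fun j => isLowerSet_subinvRowSet_one (hnonneg j 1 0)) hrows
  have hM : ∀ A ∈ List.ofFn M,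
      (∀ s t, 0 ≤ A s t) ∧ lam • simplexVec s ≤ A *ᵥ simplexVec s := by
    intro A hA
    obtain ⟨i, rfl⟩ := List.mem_ofFn.1 hA
    exact ⟨hnonneg i, smul_le_mulVec_simplexVec_iff.2 ⟨hs0 i, hs1 i⟩⟩
  have hP := pow_length_smul_le_list_prod_mulVec hlam (List.ofFn M) hM
  rw [List.length_ofFn] at hP
  exact (le_specRad_iff_exists_smul_le_mulVec_simplexVec
    (list_prod_nonneg _ fun A hA => (hM A hA).1)).2 ⟨s, hP⟩
end

section
/- Let U_1, …, U_k, V_1, …, V_k be compact subsets of ℝ²_{≥0} and λ ≥ 0 such that for each i, j ∈ [k] there exist u_{i,j} ∈ U_i and v_{i,j} ∈ V_j with ρ([u_{i,j}; v_{i,j}]) ≤ λ, where [u; v] denotes the 2×2 matrix with first row u and second row v. Then there exist u_i ∈ U_i and v_i ∈ V_i for each i ∈ [k] such that, setting M_i := [u_i; v_i], for every pair i ≤ j in [k] the product M^{[i,j]} := M_i M_{i+1} ⋯ M_j satisfies ρ(M^{[i,j]}) ≤ λ^{j−i+1}. -/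
open Filter

/-!
A nonnegative `2 × 2` matrix `A` has real eigenvalues, and `ρ(A) ≤ r` iff `A₀₀, A₁₁ ≤ r` and
`A₀₁ A₁₀ ≤ (r - A₀₀)(r - A₁₁)`, iff some weight `w = (1 - t, t)`, `t ∈ [0, 1]`, has `A w ≤ r w`
while `A₀₀, A₁₁ ≤ r`. The latter condition is one condition on each row, and it is stable under
products (with the bounds multiplied), so it suffices to find one `t` feasible for some row of
every `U i` and of every `V j`. The bottom-row condition is monotone in `t` and the top-row one
antitone: take `t = σ j₀`, the largest of the least feasible weights `σ j` of the (compact) `V j`.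
Then every `V j` is feasible at `t`, and every `U i` at the weight of the pair `(i, j₀)`, which is
at least `σ j₀`, hence also at `t`.
-/

open Set

theorem Matrix.of_fin_two_nonneg {u v : Fin 2 → ℝ} (hu : 0 ≤ u) (hv : 0 ≤ v) :
    ∀ i j, 0 ≤ Matrix.of ![u, v] i j := by
  simp only [Fin.forall_fin_two]
  exact ⟨⟨hu 0, hu 1⟩, ⟨hv 0, hv 1⟩⟩

namespace BS

variable {A B : Matrix (Fin 2) (Fin 2) ℝ} {r s t : ℝ}

theorem mem_spectrum_map_ofReal_fin_two_iff (A : Matrix (Fin 2) (Fin 2) ℝ) (μ : ℂ) :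
    μ ∈ spectrum ℂ (A.map Complex.ofReal) ↔
      (μ - A 0 0) * (μ - A 1 1) - A 0 1 * A 1 0 = 0 := by
  rw [spectrum.mem_iff, Matrix.isUnit_iff_isUnit_det, isUnit_iff_ne_zero, not_not]
  simp [Matrix.det_fin_two, Matrix.algebraMap_eq_diagonal, Matrix.diagonal]

theorem specRad_fin_two_eq (hbc : 0 ≤ A 0 1 * A 1 0) (htr : 0 ≤ A 0 0 + A 1 1) :
    specRad A =
      (A 0 0 + A 1 1 + √((A 0 0 - A 1 1) ^ 2 + 4 * (A 0 1 * A 1 0))) / 2 := by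
  set a := A 0 0
  set d := A 1 1
  set Δ := (a - d) ^ 2 + 4 * (A 0 1 * A 1 0)
  have hΔ : (√Δ : ℂ) ^ 2 = ((a : ℂ) - d) ^ 2 + 4 * (A 0 1 * A 1 0) := by
    exact_mod_cast Real.sq_sqrt (show 0 ≤ Δ by positivity)
  have hmem : ∀ μ : ℂ, μ ∈ spectrum ℂ (A.map Complex.ofReal) ↔
      μ = ((a + d + √Δ) / 2 : ℝ) ∨ μ = ((a + d - √Δ) / 2 : ℝ) := by
    intro μ
    rw [mem_spectrum_map_ofReal_fin_two_iff, ← sub_eq_zero (b := (((a + d + √Δ) / 2 : ℝ) : ℂ)),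
      ← sub_eq_zero (b := (((a + d - √Δ) / 2 : ℝ) : ℂ)), ← mul_eq_zero]
    push_cast
    constructor <;> intro h
    · linear_combination h - hΔ / 4
    · linear_combination h + hΔ / 4
  have hsqrt := Real.sqrt_nonneg Δ
  refine IsGreatest.csSup_eq ⟨⟨_, (hmem _).2 (Or.inl rfl), ?_⟩, ?_⟩
  · rw [Complex.norm_real, Real.norm_of_nonneg (by positivity)]
  · rintro _ ⟨μ, hμ, rfl⟩
    rcases (hmem μ).1 hμ with rfl | rfl <;>
      rw [Complex.norm_real, Real.norm_eq_abs, abs_le] <;> constructor <;> linarith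

theorem specRad_fin_two_le_iff (hbc : 0 ≤ A 0 1 * A 1 0) (htr : 0 ≤ A 0 0 + A 1 1) :
    specRad A ≤ r ↔ A 0 0 ≤ r ∧ A 1 1 ≤ r ∧ A 0 1 * A 1 0 ≤ (r - A 0 0) * (r - A 1 1) := by
  rw [specRad_fin_two_eq hbc htr, div_le_iff₀ two_pos, ← le_sub_iff_add_le', Real.sqrt_le_iff]
  constructor
  · rintro ⟨h₁, h₂⟩
    refine ⟨?_, ?_, ?_⟩ <;> nlinarith
  · rintro ⟨h₁, h₂, h₃⟩
    constructor <;> nlinarith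

/-- For a nonnegative matrix `A` with rows `u, v` and the weight `w = (1 - t, t)`,
`TopRowBound r t u` says `A₀₀ ≤ r` and `(A w)₀ ≤ r w₀`, and `BottomRowBound r t v` says
`A₁₁ ≤ r` and `(A w)₁ ≤ r w₁`. -/
def TopRowBound (r t : ℝ) (u : Fin 2 → ℝ) : Prop :=
  u 0 ≤ r ∧ u 1 * t ≤ (r - u 0) * (1 - t)

def BottomRowBound (r t : ℝ) (v : Fin 2 → ℝ) : Prop :=
  v 1 ≤ r ∧ v 0 * (1 - t) ≤ (r - v 1) * t

theorem TopRowBound.anti {u : Fin 2 → ℝ} (hu : TopRowBound r s u) (hu₁ : 0 ≤ u 1) (hts : t ≤ s) :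
    TopRowBound r t u :=
  ⟨hu.1, by nlinarith [hu.2, sub_nonneg.2 hu.1]⟩

theorem BottomRowBound.mono {v : Fin 2 → ℝ} (hv : BottomRowBound r s v) (hv₀ : 0 ≤ v 0)
    (hst : s ≤ t) : BottomRowBound r t v :=
  ⟨hv.1, by nlinarith [hv.2, sub_nonneg.2 hv.1]⟩

theorem mul_le_of_topRowBound_of_bottomRowBound {r' : ℝ} {u v : Fin 2 → ℝ}
    (hu : TopRowBound r t u) (hv : BottomRowBound r' t v) (hu₁ : 0 ≤ u 1) (hv₀ : 0 ≤ v 0)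
    (ht : t ∈ Icc 0 1) : u 1 * v 0 ≤ (r - u 0) * (r' - v 1) := by
  obtain ⟨⟨hu₀, hut⟩, ⟨hv₁, hvt⟩⟩ := And.intro hu hv
  have hrr' : 0 ≤ (r - u 0) * (r' - v 1) := mul_nonneg (by linarith) (by linarith)
  rcases ht.1.eq_or_lt with rfl | ht₀
  · nlinarith
  rcases ht.2.eq_or_lt with rfl | ht₁
  · nlinarith
  have := mul_le_mul hut hvt (by nlinarith) (by nlinarith)
  nlinarith [mul_pos ht₀ (sub_pos.2 ht₁)]

structure IsSubinvariant (r t : ℝ) (A : Matrix (Fin 2) (Fin 2) ℝ) : Prop where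
  nonneg : ∀ i j, 0 ≤ A i j
  top : TopRowBound r t (A 0)
  bottom : BottomRowBound r t (A 1)

theorem IsSubinvariant.one : IsSubinvariant 1 t 1 :=
  ⟨fun i j => Matrix.zero_le_one_elem i j, by simp [TopRowBound], by simp [BottomRowBound]⟩

theorem IsSubinvariant.mul (hA : IsSubinvariant r t A) (hB : IsSubinvariant s t B)
    (ht : t ∈ Icc 0 1) : IsSubinvariant (r * s) t (A * B) := by
  have hAB : ∀ i j, (A * B) i j = A i 0 * B 0 j + A i 1 * B 1 j := fun i j => by
    rw [Matrix.mul_apply, Fin.sum_univ_two]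
  have hA₀₁₁₀ := mul_le_of_topRowBound_of_bottomRowBound hA.top hB.bottom (hA.nonneg 0 1)
    (hB.nonneg 1 0) ht
  have hB₀₁₁₀ := mul_le_of_topRowBound_of_bottomRowBound hB.top hA.bottom (hB.nonneg 0 1)
    (hA.nonneg 1 0) ht
  obtain ⟨hA0, ⟨hA₀₀, hAt⟩, ⟨hA₁₁, hAb⟩⟩ := hA
  obtain ⟨hB0, ⟨hB₀₀, hBt⟩, ⟨hB₁₁, hBb⟩⟩ := hB
  have hs : 0 ≤ s := (hB0 0 0).trans hB₀₀
  have hAw₀ : A 0 0 * (1 - t) + A 0 1 * t ≤ r * (1 - t) := by linarith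
  have hAw₁ : A 1 0 * (1 - t) + A 1 1 * t ≤ r * t := by linarith
  have hBw₀ : B 0 0 * (1 - t) + B 0 1 * t ≤ s * (1 - t) := by linarith
  have hBw₁ : B 1 0 * (1 - t) + B 1 1 * t ≤ s * t := by linarith
  refine ⟨fun i j => ?_, ⟨?_, ?_⟩, ⟨?_, ?_⟩⟩ <;> simp only [hAB]
  · exact add_nonneg (mul_nonneg (hA0 i 0) (hB0 0 j)) (mul_nonneg (hA0 i 1) (hB0 1 j))
  · nlinarith [mul_nonneg (hA0 0 0) (sub_nonneg.2 hB₀₀), mul_nonneg (hB0 1 1) (sub_nonneg.2 hA₀₀)]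
  · nlinarith [mul_le_mul_of_nonneg_left hBw₀ (hA0 0 0), mul_le_mul_of_nonneg_left hBw₁ (hA0 0 1),
      mul_le_mul_of_nonneg_left hAw₀ hs]
  · nlinarith [mul_nonneg (hA0 1 1) (sub_nonneg.2 hB₁₁), mul_nonneg (hB0 0 0) (sub_nonneg.2 hA₁₁)]
  · nlinarith [mul_le_mul_of_nonneg_left hBw₀ (hA0 1 0), mul_le_mul_of_nonneg_left hBw₁ (hA0 1 1),
      mul_le_mul_of_nonneg_left hAw₁ hs]

theorem IsSubinvariant.list_prod {l : List (Matrix (Fin 2) (Fin 2) ℝ)}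
    (hl : ∀ A ∈ l, IsSubinvariant r t A) (ht : t ∈ Icc 0 1) :
    IsSubinvariant (r ^ l.length) t l.prod := by
  induction l with
  | nil => simpa using IsSubinvariant.one
  | cons A l ih =>
    rw [List.prod_cons, List.length_cons, pow_succ']
    exact (hl A List.mem_cons_self).mul (ih fun B hB => hl B (List.mem_cons_of_mem A hB)) ht

theorem IsSubinvariant.specRad_le (hA : IsSubinvariant r t A) (ht : t ∈ Icc 0 1) :
    specRad A ≤ r :=
  (specRad_fin_two_le_iff (mul_nonneg (hA.nonneg 0 1) (hA.nonneg 1 0))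
    (add_nonneg (hA.nonneg 0 0) (hA.nonneg 1 1))).2
    ⟨hA.top.1, hA.bottom.1,
      mul_le_of_topRowBound_of_bottomRowBound hA.top hA.bottom (hA.nonneg 0 1) (hA.nonneg 1 0) ht⟩

theorem exists_isSubinvariant_of_specRad_le (hA : ∀ i j, 0 ≤ A i j) (h : specRad A ≤ r) :
    ∃ t ∈ Icc 0 1, IsSubinvariant r t A := by
  obtain ⟨h₀₀, h₁₁, h₀₁₁₀⟩ := (specRad_fin_two_le_iff (mul_nonneg (hA 0 1) (hA 1 0))
    (add_nonneg (hA 0 0) (hA 1 1))).1 h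
  rcases (add_nonneg (hA 1 0) (sub_nonneg.2 h₁₁)).eq_or_lt with hD | hD
  · refine ⟨0, left_mem_Icc.2 zero_le_one, hA, ⟨h₀₀, by simpa using h₀₀⟩,
      ⟨h₁₁, by nlinarith [hA 1 0]⟩⟩
  · -- chosen so that the bottom row bound holds with equality
    refine ⟨A 1 0 / (A 1 0 + (r - A 1 1)), ⟨div_nonneg (hA 1 0) hD.le, ?_⟩, hA, ⟨h₀₀, ?_⟩,
      ⟨h₁₁, ?_⟩⟩
    · rw [div_le_one hD]; linarith
    · rw [one_sub_div hD.ne', ← mul_div_assoc, ← mul_div_assoc, div_le_div_iff_of_pos_right hD]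
      nlinarith
    · exact le_of_eq (by field_simp; ring)

theorem isCompact_setOf_bottomRowBound {V : Set (Fin 2 → ℝ)} (hV : IsCompact V) (r : ℝ) :
    IsCompact {t ∈ Icc (0 : ℝ) 1 | ∃ v ∈ V, BottomRowBound r t v} := by
  have hclosed : IsClosed {p : (Fin 2 → ℝ) × ℝ | BottomRowBound r p.2 p.1} := by
    simp only [BottomRowBound, ofPred_and]
    exact (isClosed_le (by fun_prop) (by fun_prop)).inter
      (isClosed_le (by fun_prop) (by fun_prop))
  convert ((hV.prod isCompact_Icc).inter_right hclosed).image continuous_snd using 1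
  ext t
  simp only [mem_ofPred_eq, mem_image, mem_inter_iff, mem_prod, Prod.exists, exists_eq_right]
  tauto

theorem exists_common_weight {ι : Type*} (s : Finset ι) (U V : ι → Set (Fin 2 → ℝ)) {r : ℝ}
    (hV : ∀ j ∈ s, IsCompact (V j)) (hU₁ : ∀ i ∈ s, ∀ u ∈ U i, 0 ≤ u 1)
    (hV₀ : ∀ j ∈ s, ∀ v ∈ V j, 0 ≤ v 0)
    (hUV : ∀ i ∈ s, ∀ j ∈ s, ∃ u ∈ U i, ∃ v ∈ V j, ∃ t ∈ Icc 0 1,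
      TopRowBound r t u ∧ BottomRowBound r t v) :
    ∃ t ∈ Icc (0 : ℝ) 1,
      (∀ i ∈ s, ∃ u ∈ U i, TopRowBound r t u) ∧ ∀ j ∈ s, ∃ v ∈ V j, BottomRowBound r t v := by
  rcases s.eq_empty_or_nonempty with rfl | hs
  · exact ⟨0, left_mem_Icc.2 zero_le_one, by simp, by simp⟩
  set T : ι → Set ℝ := fun j => {t ∈ Icc (0 : ℝ) 1 | ∃ v ∈ V j, BottomRowBound r t v}
  have hT : ∀ j ∈ s, sInf (T j) ∈ T j := fun j hj =>
    have ⟨_, _, v, hv, t, ht, _, hvt⟩ := hUV j hj j hj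
    (isCompact_setOf_bottomRowBound (hV j hj) r).sInf_mem ⟨t, ht, v, hv, hvt⟩
  obtain ⟨j₀, hj₀, hmax⟩ := s.exists_max_image (fun j => sInf (T j)) hs
  refine ⟨sInf (T j₀), (hT j₀ hj₀).1, fun i hi => ?_, fun j hj => ?_⟩
  · obtain ⟨u, hu, v, hv, t, ht, hut, hvt⟩ := hUV i hi j₀ hj₀
    exact ⟨u, hu, hut.anti (hU₁ i hi u hu) (csInf_le ⟨0, fun _ h => h.1.1⟩ ⟨ht, v, hv, hvt⟩)⟩
  · obtain ⟨-, v, hv, hvt⟩ := hT j hj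
    exact ⟨v, hv, hvt.mono (hV₀ j hj v hv) (hmax j hj)⟩

end BS

open BS in
theorem specRad_prod_le_general (k : ℕ) (U V : ℕ → Set (Fin 2 → ℝ)) (lam : ℝ)
    (hVc : ∀ i < k, IsCompact (V i))
    (hUnn : ∀ i < k, ∀ u ∈ U i, ∀ t, 0 ≤ u t)
    (hVnn : ∀ i < k, ∀ v ∈ V i, ∀ t, 0 ≤ v t)
    (hmix : ∀ i < k, ∀ j < k, ∃ u ∈ U i, ∃ v ∈ V j,
      specRad (Matrix.of ![u, v]) ≤ lam) :
    ∃ u v : ℕ → (Fin 2 → ℝ), (∀ i < k, u i ∈ U i) ∧ (∀ i < k, v i ∈ V i) ∧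
      ∀ i j : ℕ, i ≤ j → j < k →
        specRad ((List.ofFn (fun t : Fin (j - i + 1) =>
            Matrix.of ![u (i + (t : ℕ)), v (i + (t : ℕ))])).prod)
          ≤ lam ^ (j - i + 1) := by
  obtain ⟨t, ht, hU, hV⟩ := exists_common_weight (Finset.range k) U V
    (fun j hj => hVc j (Finset.mem_range.1 hj))
    (fun i hi u hu => hUnn i (Finset.mem_range.1 hi) u hu 1)
    (fun j hj v hv => hVnn j (Finset.mem_range.1 hj) v hv 0)
    fun i hi j hj => by
      rw [Finset.mem_range] at hi hj
      obtain ⟨u, hu, v, hv, hρ⟩ := hmix i hi j hj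
      obtain ⟨t, ht, hA⟩ := exists_isSubinvariant_of_specRad_le
        (Matrix.of_fin_two_nonneg (hUnn i hi u hu) (hVnn j hj v hv)) hρ
      exact ⟨u, hu, v, hv, t, ht, hA.top, hA.bottom⟩
  simp only [Finset.mem_range] at hU hV
  choose! u hu hut using hU
  choose! v hv hvt using hV
  refine ⟨u, v, hu, hv, fun i j hij hjk => ?_⟩
  have hM : ∀ n < k, IsSubinvariant lam t (Matrix.of ![u n, v n]) := fun n hn =>
    ⟨Matrix.of_fin_two_nonneg (hUnn n hn _ (hu n hn)) (hVnn n hn _ (hv n hn)), hut n hn, hvt n hn⟩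
  have hprod := IsSubinvariant.list_prod
    (List.forall_mem_ofFn_iff.2 fun m : Fin (j - i + 1) => hM (i + m) (by omega)) ht
  rw [List.length_ofFn] at hprod
  exact hprod.specRad_le ht

open BS in
/-- Given compact subsets `U 0, …, U (k-1), V 0, …, V (k-1)` of
`ℝ²_{≥0}` such that for all `i, j < k` some matrix `[u; v]` with `u ∈ U i`,
`v ∈ V j` has spectral radius at most `lam ≥ 0`, one can choose `u i ∈ U i` and
`v i ∈ V i` so that, with `M i := [u i; v i]`, every product
`M i * M (i+1) * ⋯ * M j` (for `i ≤ j < k`) has spectral radius at most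
`lam ^ (j - i + 1)`. -/
theorem specRad_prod_le (k : ℕ) (U V : ℕ → Set (Fin 2 → ℝ)) (lam : ℝ) (hlam : 0 ≤ lam)
    (hUc : ∀ i < k, IsCompact (U i)) (hVc : ∀ i < k, IsCompact (V i))
    (hUnn : ∀ i < k, ∀ u ∈ U i, ∀ t, 0 ≤ u t)
    (hVnn : ∀ i < k, ∀ v ∈ V i, ∀ t, 0 ≤ v t)
    (hmix : ∀ i < k, ∀ j < k, ∃ u ∈ U i, ∃ v ∈ V j,
      specRad (Matrix.of ![u, v]) ≤ lam) :
    ∃ u v : ℕ → (Fin 2 → ℝ), (∀ i < k, u i ∈ U i) ∧ (∀ i < k, v i ∈ V i) ∧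
      ∀ i j : ℕ, i ≤ j → j < k →
        specRad ((List.ofFn (fun t : Fin (j - i + 1) =>
            Matrix.of ![u (i + (t : ℕ)), v (i + (t : ℕ))])).prod)
          ≤ lam ^ (j - i + 1) :=
  specRad_prod_le_general k U V lam hVc hUnn hVnn hmix
end

section
/- Let U_1, …, U_k, V_1, …, V_k be compact subsets of ℝ²_{≥0}, all of whose vectors have every coordinate at most n, and let λ ≥ 0 be such that for each i, j ∈ [k] there exist u ∈ U_i and v ∈ V_j with ρ([u; v]) ≤ λ. Then there exist u_i ∈ U_i and v_i ∈ V_i for each i ∈ [k] such that, setting M_i := [u_i; v_i], the product M := M_1 M_2 ⋯ M_k has both diagonal entries at most λ^k and both off-diagonal entries at most n k λ^{k−1}; in particular every row sum of M is at most λ^k + n k λ^{k−1}. -/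
/-!
For a nonnegative matrix `[α β; γ δ]` with `ρ ≤ λ`, the Perron root `μ ≥ max α δ` satisfies
`(μ - α)(μ - δ) = βγ`, whence `α, δ ≤ λ` and `βγ ≤ (λ - α)(λ - δ)`. Choosing in every `U i`
the row minimising the slope `β / (λ - α)` and in every `V j` the row minimising
`γ / (λ - δ)` (measured as `p / (p + q)`, continuous where `p > 0`, so compactness applies)
makes this cross inequality hold for all pairs `(i, j)` of chosen rows at once.

The cross inequalities give one `b ≥ 0` with `b β_i ≤ λ - α_i` and `γ_j ≤ b (λ - δ_j)`, i.e.
`A_i (1, b)ᵀ ≤ λ (1, b)ᵀ` for every factor, so the `(0, 0)` entry of the product is at most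
`λ^k`; the `(1, 1)` entry follows by swapping the coordinates. Each further factor then adds
at most `n λ^m` to an off-diagonal entry.
-/

open Filter

namespace Matrix

variable {ι : Type*} [Fintype ι]

lemma list_prod_apply_nonneg [DecidableEq ι] {l : List (Matrix ι ι ℝ)}
    (hl : ∀ A ∈ l, ∀ i j, 0 ≤ A i j) (i j : ι) : 0 ≤ l.prod i j := by
  induction l generalizing i j with
  | nil => by_cases h : i = j <;> simp [h]
  | cons A l ih =>
    rw [List.prod_cons, mul_apply]
    exact Finset.sum_nonneg fun r _ =>
      mul_nonneg (hl A List.mem_cons_self i r) (ih (fun B hB => hl B (.tail _ hB)) r j)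

lemma mulVec_mono_of_nonneg_s5 {A : Matrix ι ι ℝ} (hA : ∀ i j, 0 ≤ A i j) {v w : ι → ℝ}
    (h : v ≤ w) : A *ᵥ v ≤ A *ᵥ w :=
  fun i => Finset.sum_le_sum fun j _ => mul_le_mul_of_nonneg_left (h j) (hA i j)

lemma list_prod_mulVec_le [DecidableEq ι] {l : List (Matrix ι ι ℝ)} {w : ι → ℝ} {c : ℝ}
    (hc : 0 ≤ c) (hl : ∀ A ∈ l, ∀ i j, 0 ≤ A i j) (hw : ∀ A ∈ l, A *ᵥ w ≤ c • w) :
    l.prod *ᵥ w ≤ c ^ l.length • w := by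
  induction l with
  | nil => simp
  | cons A l ih =>
    calc (A :: l).prod *ᵥ w = A *ᵥ (l.prod *ᵥ w) := by rw [List.prod_cons, mulVec_mulVec]
      _ ≤ A *ᵥ (c ^ l.length • w) :=
        mulVec_mono_of_nonneg_s5 (hl A List.mem_cons_self)
          (ih (fun B hB => hl B (.tail _ hB)) fun B hB => hw B (.tail _ hB))
      _ = c ^ l.length • (A *ᵥ w) := mulVec_smul _ _ _
      _ ≤ c ^ l.length • (c • w) :=
        smul_le_smul_of_nonneg_left (hw A List.mem_cons_self) (pow_nonneg hc _)
      _ = c ^ (A :: l).length • w := by rw [smul_smul, List.length_cons, pow_succ]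

lemma list_prod_apply_self_le_of_mulVec_le [DecidableEq ι] {l : List (Matrix ι ι ℝ)}
    {w : ι → ℝ} {c : ℝ} (hc : 0 ≤ c) (hl : ∀ A ∈ l, ∀ i j, 0 ≤ A i j) (hw0 : 0 ≤ w) {s : ι}
    (hws : w s = 1) (hw : ∀ A ∈ l, A *ᵥ w ≤ c • w) : l.prod s s ≤ c ^ l.length :=
  calc l.prod s s = l.prod s s * w s := by rw [hws, mul_one]
    _ ≤ (l.prod *ᵥ w) s :=
      Finset.single_le_sum (f := fun j => l.prod s j * w j)
        (fun j _ => mul_nonneg (list_prod_apply_nonneg hl s j) (hw0 j)) (Finset.mem_univ s)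
    _ ≤ (c ^ l.length • w) s := list_prod_mulVec_le hc hl hw s
    _ = c ^ l.length := by simp [hws]

end Matrix

namespace BS

lemma norm_le_specRad {m : Type*} [Fintype m] [DecidableEq m] {A : Matrix m m ℝ} {μ : ℂ}
    (hμ : μ ∈ spectrum ℂ (A.map Complex.ofReal)) : ‖μ‖ ≤ specRad A := by
  refine le_csSup (((Matrix.finite_spectrum (A.map Complex.ofReal)).image
    fun z : ℂ => ‖z‖).bddAbove.mono ?_) ⟨μ, hμ, rfl⟩
  rintro _ ⟨ν, hν, rfl⟩
  exact ⟨ν, hν, rfl⟩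

lemma mem_spectrum_map_ofReal_iff_fin_two (A : Matrix (Fin 2) (Fin 2) ℝ) (z : ℂ) :
    z ∈ spectrum ℂ (A.map Complex.ofReal) ↔
      (z - A 0 0) * (z - A 1 1) - (A 0 1 : ℂ) * A 1 0 = 0 := by
  rw [spectrum.mem_iff, Matrix.isUnit_iff_isUnit_det, isUnit_iff_ne_zero, not_not,
    Matrix.det_fin_two]
  simp [Matrix.algebraMap_matrix_apply]

lemma le_of_specRad_le_fin_two {A : Matrix (Fin 2) (Fin 2) ℝ} {lam : ℝ}
    (hA : 0 ≤ A 0 1 * A 1 0) (h : specRad A ≤ lam) :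
    A 0 0 ≤ lam ∧ A 1 1 ≤ lam ∧ A 0 1 * A 1 0 ≤ (lam - A 0 0) * (lam - A 1 1) := by
  obtain ⟨s, hs2, hs⟩ : ∃ s, s ^ 2 = (A 0 0 - A 1 1) ^ 2 + 4 * (A 0 1 * A 1 0) ∧
      |A 0 0 - A 1 1| ≤ s :=
    ⟨_, Real.sq_sqrt (by positivity), Real.abs_le_sqrt (by linarith)⟩
  obtain ⟨hs₁, hs₂⟩ := abs_le.mp hs
  -- `(A 0 0 + A 1 1 + s) / 2` is the larger root of the characteristic polynomial
  have hroot : ((A 0 0 + A 1 1 + s) / 2 - A 0 0) * ((A 0 0 + A 1 1 + s) / 2 - A 1 1)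
      - A 0 1 * A 1 0 = 0 := by linear_combination hs2 / 4
  have hμ : (A 0 0 + A 1 1 + s) / 2 ≤ lam := by
    have hmem := (mem_spectrum_map_ofReal_iff_fin_two A ((A 0 0 + A 1 1 + s) / 2 : ℝ)).2
      (by exact_mod_cast hroot)
    have hnorm := (norm_le_specRad hmem).trans h
    rw [Complex.norm_real, Real.norm_eq_abs] at hnorm
    exact (le_abs_self _).trans hnorm
  refine ⟨by linarith, by linarith, ?_⟩
  nlinarith [mul_nonneg (sub_nonneg.2 hμ) (by linarith : 0 ≤ lam - (A 0 0 + A 1 1 + s) / 2 + s)]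

end BS

lemma exists_fun_forall_lt {α : Type*} [Nonempty α] {k : ℕ} {P : ℕ → α → Prop}
    (h : ∀ i < k, ∃ a, P i a) : ∃ f : ℕ → α, ∀ i < k, P i (f i) := by
  have h' : ∀ i, ∃ a, i < k → P i a := fun i => by
    by_cases hi : i < k
    · exact (h i hi).imp fun _ ha _ => ha
    · exact ⟨Classical.arbitrary α, fun h => absurd h hi⟩
  choose f hf using h'
  exact ⟨f, hf⟩

lemma exists_mul_le_and_le_mul {α : Type*} (s : Finset α) {x p y q : α → ℝ}
    (hp : ∀ i ∈ s, 0 ≤ p i) (hx : ∃ i ∈ s, 0 < x i)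
    (hxy : ∀ i ∈ s, ∀ j ∈ s, x i * y j ≤ p i * q j) :
    ∃ b, 0 ≤ b ∧ (∀ i ∈ s, b * x i ≤ p i) ∧ ∀ j ∈ s, y j ≤ b * q j := by
  obtain ⟨i₀, hi₀, hmin⟩ := (s.filter (0 < x ·)).exists_min_image (fun i => p i / x i)
    (by simpa [Finset.filter_nonempty_iff] using hx)
  rw [Finset.mem_filter] at hi₀
  have hb : 0 ≤ p i₀ / x i₀ := div_nonneg (hp _ hi₀.1) hi₀.2.le
  refine ⟨p i₀ / x i₀, hb, fun i hi => ?_, fun j hj => ?_⟩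
  · rcases le_or_gt (x i) 0 with hxi | hxi
    · exact (mul_nonpos_of_nonneg_of_nonpos hb hxi).trans (hp i hi)
    · exact (le_div_iff₀ hxi).1 (hmin i (Finset.mem_filter.2 ⟨hi, hxi⟩))
  · rw [div_mul_eq_mul_div, le_div_iff₀ hi₀.2]
    linarith [hxy i₀ hi₀.1 j hj]

lemma pos_and_mul_le_of_div_add_le {p q p' q' : ℝ} (hp : 0 < p) (hq : 0 ≤ q) (hp' : 0 ≤ p')
    (hq' : 0 ≤ q') (h : p / (p + q) ≤ p' / (p' + q')) : 0 < p' ∧ p * q' ≤ p' * q := by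
  have hpos : 0 < p' / (p' + q') := (div_pos hp (by linarith)).trans_le h
  rcases hp'.eq_or_lt with rfl | hp'
  · simp at hpos
  rw [div_le_div_iff₀ (by linarith) (by linarith)] at h
  exact ⟨hp', by linarith⟩

lemma mul_le_mul_of_div_add_le {p q r s p' q' r' s' : ℝ} (hp : 0 ≤ p) (hq : 0 ≤ q)
    (hr : 0 ≤ r) (hs : 0 ≤ s) (hp' : 0 ≤ p') (hq' : 0 ≤ q') (hr' : 0 ≤ r') (hs' : 0 ≤ s')
    (hpq : p / (p + q) ≤ p' / (p' + q')) (hrs : r / (r + s) ≤ r' / (r' + s'))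
    (h : p' * r' ≤ q' * s') : p * r ≤ q * s := by
  rcases hp.eq_or_lt with rfl | hp
  · simpa using mul_nonneg hq hs
  rcases hr.eq_or_lt with rfl | hr
  · simpa using mul_nonneg hq hs
  obtain ⟨hp'_pos, hpq⟩ := pos_and_mul_le_of_div_add_le hp hq hp' hq' hpq
  obtain ⟨hr'_pos, hrs⟩ := pos_and_mul_le_of_div_add_le hr hs hr' hs' hrs
  refine le_of_mul_le_mul_right ?_ ((mul_pos hp'_pos hr'_pos).trans_le h)
  calc p * r * (q' * s') = (p * q') * (r * s') := by ring
    _ ≤ (p' * q) * (r' * s) := mul_le_mul hpq hrs (by positivity) (by positivity)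
    _ = (p' * r') * (q * s) := by ring
    _ ≤ (q' * s') * (q * s) := mul_le_mul_of_nonneg_right h (by positivity)
    _ = q * s * (q' * s') := by ring

lemma IsCompact.exists_isMinOn_div_add {X : Type*} [TopologicalSpace X] {K : Set X}
    (hK : IsCompact K) (hne : K.Nonempty) {f g : X → ℝ} (hf : ContinuousOn f K)
    (hg : ContinuousOn g K) (hf0 : ∀ x ∈ K, 0 ≤ f x) (hg0 : ∀ x ∈ K, 0 ≤ g x) :
    ∃ x ∈ K, IsMinOn (fun x => f x / (f x + g x)) K x := by
  by_cases hzero : ∃ x ∈ K, f x = 0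
  · obtain ⟨x, hx, hfx⟩ := hzero
    refine ⟨x, hx, isMinOn_iff.2 fun y hy => ?_⟩
    simpa [hfx] using div_nonneg (hf0 y hy) (add_nonneg (hf0 y hy) (hg0 y hy))
  · push Not at hzero
    refine hK.exists_isMinOn hne (hf.div (hf.add hg) fun x hx => ?_)
    have := (hf0 x hx).lt_of_ne' (hzero x hx)
    linarith [hg0 x hx]

lemma IsCompact.exists_forall_div_add_le {K : Set (Fin 2 → ℝ)} (hK : IsCompact K)
    (hK0 : ∀ w ∈ K, ∀ t, 0 ≤ w t) {lam : ℝ} (r c : Fin 2) (hne : ∃ w ∈ K, w r ≤ lam) :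
    ∃ w ∈ K, w r ≤ lam ∧ ∀ w' ∈ K, w' r ≤ lam →
      w c / (w c + (lam - w r)) ≤ w' c / (w' c + (lam - w' r)) := by
  obtain ⟨w, ⟨hwK, hwr⟩, hmin⟩ :=
    (hK.inter_right (isClosed_le (continuous_apply r) continuous_const)).exists_isMinOn_div_add
      hne (continuous_apply c).continuousOn (continuous_const.sub (continuous_apply r)).continuousOn
      (fun w hw => hK0 w hw.1 c) (fun w hw => sub_nonneg.2 hw.2)
  exact ⟨w, hwK, hwr, fun w' hw' hw'r => isMinOn_iff.1 hmin w' ⟨hw', hw'r⟩⟩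

lemma mul_add_mul_le_succ_mul_pow {a b x y lam n : ℝ} {m : ℕ} (hlam : 0 ≤ lam) (ha : a ≤ lam)
    (hb0 : 0 ≤ b) (hb : b ≤ n) (hx0 : 0 ≤ x) (hx : x ≤ n * m * lam ^ (m - 1)) (hy0 : 0 ≤ y)
    (hy : y ≤ lam ^ m) : a * x + b * y ≤ n * (m + 1 : ℕ) * lam ^ (m + 1 - 1) := by
  have hpow : lam * (n * m * lam ^ (m - 1)) = n * m * lam ^ m := by
    rcases m with _ | m
    · simp
    · rw [Nat.add_sub_cancel, pow_succ]; ring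
  calc a * x + b * y ≤ lam * (n * m * lam ^ (m - 1)) + n * lam ^ m :=
        add_le_add ((mul_le_mul_of_nonneg_right ha hx0).trans (mul_le_mul_of_nonneg_left hx hlam))
          (mul_le_mul hb hy hy0 (hb0.trans hb))
    _ = n * (m + 1 : ℕ) * lam ^ (m + 1 - 1) := by rw [hpow, Nat.add_sub_cancel]; push_cast; ring

section TwoByTwo

variable {S : Set (Matrix (Fin 2) (Fin 2) ℝ)} {lam : ℝ} {l : List (Matrix (Fin 2) (Fin 2) ℝ)}

lemma list_prod_zero_zero_le (hlam : 0 ≤ lam) (hnn : ∀ A ∈ S, ∀ i j, 0 ≤ A i j)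
    (h00 : ∀ A ∈ S, A 0 0 ≤ lam)
    (hcross : ∀ A ∈ S, ∀ B ∈ S, A 0 1 * B 1 0 ≤ (lam - A 0 0) * (lam - B 1 1))
    (hl : ∀ A ∈ l, A ∈ S) : l.prod 0 0 ≤ lam ^ l.length := by
  have hlnn : ∀ A ∈ l, ∀ i j, 0 ≤ A i j := fun A hA => hnn A (hl A hA)
  by_cases h01 : ∃ A ∈ l, 0 < A 0 1
  · obtain ⟨b, hb, hb01, hb10⟩ := exists_mul_le_and_le_mul l.toFinset
      (x := fun A => A 0 1) (p := fun A => lam - A 0 0) (y := fun A => A 1 0)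
      (q := fun A => lam - A 1 1) (by simpa using fun A hA => h00 A (hl A hA)) (by simpa using h01)
      (by simpa using fun A hA B hB => hcross A (hl A hA) B (hl B hB))
    refine Matrix.list_prod_apply_self_le_of_mulVec_le hlam hlnn (w := ![1, b]) ?_ rfl
      fun A hA => ?_
    · intro i; fin_cases i <;> simp [hb]
    · have := hb01 A (by simpa using hA)
      have := hb10 A (by simpa using hA)
      refine Pi.le_def.2 (Fin.forall_fin_two.2 ⟨?_, ?_⟩) <;>
        simp only [Matrix.mulVec, dotProduct, Fin.sum_univ_two, Matrix.cons_val_zero,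
          Matrix.cons_val_one, Matrix.cons_val_fin_one, Pi.smul_apply, smul_eq_mul] <;> linarith
  · -- all factors are lower triangular, so `(1, 0)` is a common left sub-eigenvector
    push Not at h01
    have key := Matrix.list_prod_apply_self_le_of_mulVec_le hlam
      (l := (l.map Matrix.transpose).reverse) (w := ![1, 0]) (s := 0) ?_ ?_ rfl ?_
    · simpa [← Matrix.transpose_list_prod] using key
    · simp only [List.mem_reverse, List.mem_map]
      rintro _ ⟨A, hA, rfl⟩ i j
      exact hlnn A hA j i
    · intro i; fin_cases i <;> simp
    · simp only [List.mem_reverse, List.mem_map]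
      rintro _ ⟨A, hA, rfl⟩
      have := h00 A (hl A hA)
      have := le_antisymm (h01 A hA) (hlnn A hA 0 1)
      refine Pi.le_def.2 (Fin.forall_fin_two.2 ⟨?_, ?_⟩) <;>
        simp only [Matrix.mulVec, dotProduct, Fin.sum_univ_two, Matrix.cons_val_zero,
          Matrix.cons_val_one, Matrix.cons_val_fin_one, Pi.smul_apply, smul_eq_mul,
          Matrix.transpose_apply] <;> linarith

lemma list_prod_one_one_le (hlam : 0 ≤ lam) (hnn : ∀ A ∈ S, ∀ i j, 0 ≤ A i j)
    (h11 : ∀ A ∈ S, A 1 1 ≤ lam)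
    (hcross : ∀ A ∈ S, ∀ B ∈ S, A 0 1 * B 1 0 ≤ (lam - A 0 0) * (lam - B 1 1))
    (hl : ∀ A ∈ l, A ∈ S) : l.prod 1 1 ≤ lam ^ l.length := by
  let σ := Matrix.reindexAlgEquiv ℝ ℝ (Equiv.swap (0 : Fin 2) 1)
  have hσ : ∀ A : Matrix (Fin 2) (Fin 2) ℝ, ∀ i j,
      σ A i j = A (Equiv.swap 0 1 i) (Equiv.swap 0 1 j) := fun _ _ _ => rfl
  have key := list_prod_zero_zero_le (S := σ '' S) (l := l.map σ) hlam ?_ ?_ ?_ ?_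
  · simpa [← map_list_prod, hσ] using key
  · rintro _ ⟨A, hA, rfl⟩ i j
    exact hnn A hA _ _
  · rintro _ ⟨A, hA, rfl⟩
    simpa [hσ] using h11 A hA
  · rintro _ ⟨A, hA, rfl⟩ _ ⟨B, hB, rfl⟩
    simpa [hσ, mul_comm] using hcross B hB A hA
  · simp only [List.mem_map]
    rintro _ ⟨A, hA, rfl⟩
    exact ⟨A, hl A hA, rfl⟩

lemma list_prod_off_diag_le {n : ℝ} (hlam : 0 ≤ lam) (hnn : ∀ A ∈ S, ∀ i j, 0 ≤ A i j)
    (h00 : ∀ A ∈ S, A 0 0 ≤ lam) (h11 : ∀ A ∈ S, A 1 1 ≤ lam)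
    (h01 : ∀ A ∈ S, A 0 1 ≤ n) (h10 : ∀ A ∈ S, A 1 0 ≤ n)
    (hcross : ∀ A ∈ S, ∀ B ∈ S, A 0 1 * B 1 0 ≤ (lam - A 0 0) * (lam - B 1 1))
    (hl : ∀ A ∈ l, A ∈ S) :
    l.prod 0 1 ≤ n * l.length * lam ^ (l.length - 1) ∧
      l.prod 1 0 ≤ n * l.length * lam ^ (l.length - 1) := by
  induction l with
  | nil => simp
  | cons A l ih =>
    have hA := hl A List.mem_cons_self
    have hl' : ∀ B ∈ l, B ∈ S := fun B hB => hl B (.tail _ hB)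
    obtain ⟨ih01, ih10⟩ := ih hl'
    have hP := Matrix.list_prod_apply_nonneg fun B hB => hnn B (hl' B hB)
    simp only [List.prod_cons, Matrix.mul_apply, Fin.sum_univ_two, List.length_cons]
    constructor
    · exact mul_add_mul_le_succ_mul_pow hlam (h00 A hA) (hnn A hA 0 1) (h01 A hA) (hP 0 1) ih01
        (hP 1 1) (list_prod_one_one_le hlam hnn h11 hcross hl')
    · rw [add_comm]
      exact mul_add_mul_le_succ_mul_pow hlam (h11 A hA) (hnn A hA 1 0) (h10 A hA) (hP 1 0) ih10
        (hP 0 0) (list_prod_zero_zero_le hlam hnn h00 hcross hl')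

lemma list_prod_ofFn_entries_le {k : ℕ} {A : Fin k → Matrix (Fin 2) (Fin 2) ℝ} {n : ℝ}
    (hlam : 0 ≤ lam) (hnn : ∀ t i j, 0 ≤ A t i j) (h00 : ∀ t, A t 0 0 ≤ lam)
    (h11 : ∀ t, A t 1 1 ≤ lam) (h01 : ∀ t, A t 0 1 ≤ n) (h10 : ∀ t, A t 1 0 ≤ n)
    (hcross : ∀ s t, A s 0 1 * A t 1 0 ≤ (lam - A s 0 0) * (lam - A t 1 1)) :
    (List.ofFn A).prod 0 0 ≤ lam ^ k ∧ (List.ofFn A).prod 1 1 ≤ lam ^ k ∧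
      (List.ofFn A).prod 0 1 ≤ n * k * lam ^ (k - 1) ∧
      (List.ofFn A).prod 1 0 ≤ n * k * lam ^ (k - 1) := by
  have hl : ∀ B ∈ List.ofFn A, B ∈ Set.range A := fun B => (List.mem_ofFn' A B).1
  have hnn' : ∀ B ∈ Set.range A, ∀ i j, 0 ≤ B i j := Set.forall_mem_range.2 hnn
  have hcross' : ∀ B ∈ Set.range A, ∀ C ∈ Set.range A,
      B 0 1 * C 1 0 ≤ (lam - B 0 0) * (lam - C 1 1) :=
    Set.forall_mem_range.2 fun s => Set.forall_mem_range.2 (hcross s)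
  have d00 := list_prod_zero_zero_le hlam hnn' (Set.forall_mem_range.2 h00) hcross' hl
  have d11 := list_prod_one_one_le hlam hnn' (Set.forall_mem_range.2 h11) hcross' hl
  have off := list_prod_off_diag_le hlam hnn' (Set.forall_mem_range.2 h00)
    (Set.forall_mem_range.2 h11) (Set.forall_mem_range.2 h01) (Set.forall_mem_range.2 h10)
    hcross' hl
  rw [List.length_ofFn] at d00 d11 off
  exact ⟨d00, d11, off⟩

end TwoByTwo

lemma exists_rows_forall_mul_le_mul {k : ℕ} {U V : ℕ → Set (Fin 2 → ℝ)} {lam : ℝ}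
    (hUc : ∀ i < k, IsCompact (U i)) (hVc : ∀ i < k, IsCompact (V i))
    (hUnn : ∀ i < k, ∀ u ∈ U i, ∀ t, 0 ≤ u t) (hVnn : ∀ i < k, ∀ v ∈ V i, ∀ t, 0 ≤ v t)
    (hUV : ∀ i < k, ∀ j < k, ∃ u ∈ U i, ∃ v ∈ V j,
      u 0 ≤ lam ∧ v 1 ≤ lam ∧ u 1 * v 0 ≤ (lam - u 0) * (lam - v 1)) :
    ∃ u v : ℕ → Fin 2 → ℝ, (∀ i < k, u i ∈ U i ∧ u i 0 ≤ lam) ∧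
      (∀ i < k, v i ∈ V i ∧ v i 1 ≤ lam) ∧
      ∀ i < k, ∀ j < k, u i 1 * v j 0 ≤ (lam - u i 0) * (lam - v j 1) := by
  obtain ⟨u, hu⟩ := exists_fun_forall_lt fun i hi => (hUc i hi).exists_forall_div_add_le
    (hUnn i hi) 0 1 (by obtain ⟨u, hu, -, -, h, -⟩ := hUV i hi i hi; exact ⟨u, hu, h⟩)
  obtain ⟨v, hv⟩ := exists_fun_forall_lt fun i hi => (hVc i hi).exists_forall_div_add_le
    (hVnn i hi) 1 0 (by obtain ⟨-, -, v, hv, -, h, -⟩ := hUV i hi i hi; exact ⟨v, hv, h⟩)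
  refine ⟨u, v, fun i hi => ⟨(hu i hi).1, (hu i hi).2.1⟩, fun i hi => ⟨(hv i hi).1, (hv i hi).2.1⟩,
    fun i hi j hj => ?_⟩
  obtain ⟨huU, hu0, humin⟩ := hu i hi
  obtain ⟨hvV, hv1, hvmin⟩ := hv j hj
  obtain ⟨u', hu', v', hv', hu'0, hv'1, h⟩ := hUV i hi j hj
  exact mul_le_mul_of_div_add_le (hUnn i hi _ huU 1) (sub_nonneg.2 hu0) (hVnn j hj _ hvV 0)
    (sub_nonneg.2 hv1) (hUnn i hi _ hu' 1) (sub_nonneg.2 hu'0) (hVnn j hj _ hv' 0)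
    (sub_nonneg.2 hv'1) (humin u' hu' hu'0) (hvmin v' hv' hv'1) h

open BS in
/-- Under the hypotheses of the previous lemma, and assuming in
addition that every coordinate of every vector in the `U i` and `V i` is at most
`n`, one can choose `u i ∈ U i` and `v i ∈ V i` so that, with
`M := [u 0; v 0] * ⋯ * [u (k-1); v (k-1)]`, both diagonal entries of `M` are at most
`lam ^ k`, both off-diagonal entries are at most `n * k * lam ^ (k-1)`, and so every
row sum of `M` is at most `lam ^ k + n * k * lam ^ (k-1)`. -/
theorem prod_entries_le (k : ℕ) (n : ℝ) (U V : ℕ → Set (Fin 2 → ℝ)) (lam : ℝ)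
    (hlam : 0 ≤ lam)
    (hUc : ∀ i < k, IsCompact (U i)) (hVc : ∀ i < k, IsCompact (V i))
    (hUnn : ∀ i < k, ∀ u ∈ U i, ∀ t, 0 ≤ u t)
    (hVnn : ∀ i < k, ∀ v ∈ V i, ∀ t, 0 ≤ v t)
    (hUbd : ∀ i < k, ∀ u ∈ U i, ∀ t, u t ≤ n)
    (hVbd : ∀ i < k, ∀ v ∈ V i, ∀ t, v t ≤ n)
    (hmix : ∀ i < k, ∀ j < k, ∃ u ∈ U i, ∃ v ∈ V j,
      specRad (Matrix.of ![u, v]) ≤ lam) :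
    ∃ u v : ℕ → (Fin 2 → ℝ), (∀ i < k, u i ∈ U i) ∧ (∀ i < k, v i ∈ V i) ∧
      ∀ M : Matrix (Fin 2) (Fin 2) ℝ,
        M = (List.ofFn (fun t : Fin k => Matrix.of ![u (t : ℕ), v (t : ℕ)])).prod →
          M 0 0 ≤ lam ^ k ∧ M 1 1 ≤ lam ^ k ∧
          M 0 1 ≤ n * k * lam ^ (k - 1) ∧ M 1 0 ≤ n * k * lam ^ (k - 1) ∧
          ∀ s : Fin 2, M s 0 + M s 1 ≤ lam ^ k + n * k * lam ^ (k - 1) := by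
  have hUV : ∀ i < k, ∀ j < k, ∃ u ∈ U i, ∃ v ∈ V j,
      u 0 ≤ lam ∧ v 1 ≤ lam ∧ u 1 * v 0 ≤ (lam - u 0) * (lam - v 1) := fun i hi j hj => by
    obtain ⟨u, hu, v, hv, h⟩ := hmix i hi j hj
    exact ⟨u, hu, v, hv,
      le_of_specRad_le_fin_two (mul_nonneg (hUnn i hi u hu 1) (hVnn j hj v hv 0)) h⟩
  obtain ⟨u, v, hu, hv, hcross⟩ := exists_rows_forall_mul_le_mul hUc hVc hUnn hVnn hUV
  refine ⟨u, v, fun i hi => (hu i hi).1, fun i hi => (hv i hi).1, ?_⟩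
  rintro M rfl
  obtain ⟨d00, d11, o01, o10⟩ := list_prod_ofFn_entries_le (n := n) hlam
    (A := fun t : Fin k => Matrix.of ![u t, v t])
    (fun t i j => by fin_cases i; exacts [hUnn t t.2 _ (hu t t.2).1 j, hVnn t t.2 _ (hv t t.2).1 j])
    (fun t => (hu t t.2).2) (fun t => (hv t t.2).2) (fun t => hUbd t t.2 _ (hu t t.2).1 1)
    (fun t => hVbd t t.2 _ (hv t t.2).1 0) fun s t => hcross s s.2 t t.2
  refine ⟨d00, d11, o01, o10, fun s => ?_⟩
  fin_cases s <;> simp only [Fin.zero_eta, Fin.mk_one] <;> linarith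
end

section
/- Let g_1 and g_2 be non-constant boolean functions and let G := g_1 ∘ g_2 be their composition. Then for each b ∈ {0,1}, bs_b(G) ≥ bs^M_b(g_1), where M := min{bs_0(g_2), bs_1(g_2)}. -/
open Filter

/-!
Write the outer input as `x i = g₂ (p i)`, each `p i` chosen with `M` pairwise disjoint
`g₂`-blocks `C i 0, …, C i (M - 1)` (possible as `M ≤ bs_{x i}(g₂)`). Every index `i` lies in
at most `M` of the `g₁`-blocks `B t` at `x`, so these blocks can be given distinct slots
`σ i t : Fin M` at `i`. Then `B t` lifts to `⋃_{i ∈ B t} {i} × C i (σ i t)`, which flips exactly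
the inner outputs indexed by `B t` and so is a block of `g₁ ∘ g₂`; two lifts meeting at `(i, j)`
would share their slot at `i`, so the lifts are pairwise disjoint.
-/

namespace BS

open Finset

variable {I J : Type*} [DecidableEq I] [DecidableEq J] {f : (I → Bool) → Bool} {x : I → Bool}

theorem exists_injOn_of_card_le {α β : Type*} [Fintype β] [Nonempty β] (s : Finset α)
    (h : #s ≤ Fintype.card β) : ∃ σ : α → β, Set.InjOn σ s := by
  obtain ⟨σ, -, hσ⟩ := s.finite_toSet.exists_injOn_of_encard_le (t := (Set.univ : Set β)) (by
    rw [Set.encard_univ, ENat.card_eq_coe_fintype_card, Set.encard_coe_eq_coe_finsetCard]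
    exact_mod_cast h)
  exact ⟨σ, hσ⟩

@[simp]
theorem flipSet_empty (x : I → Bool) : flipSet x ∅ = x := by
  funext i
  simp [flipSet]

theorem IsBlock.nonempty {B : Finset I} (h : IsBlock f x B) : B.Nonempty := by
  rw [nonempty_iff_ne_empty]
  rintro rfl
  exact h (by rw [flipSet_empty])

theorem IsBlock.eq_not {B : Finset I} (h : IsBlock f x B) : f (flipSet x B) = !f x :=
  Bool.eq_not_iff.mpr h

theorem card_filter_mem_le_one_of_disjoint {k : ℕ} {B : Fin k → Finset I}
    (hD : ∀ t t', t ≠ t' → Disjoint (B t) (B t')) (i : I) : #{t | i ∈ B t} ≤ 1 :=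
  card_le_one.mpr fun t ht t' ht' => by
    by_contra hne
    exact disjoint_left.mp (hD t t' hne) (mem_filter.mp ht).2 (mem_filter.mp ht').2

variable [Fintype I] [Fintype J]

theorem card_le_mul_of_card_filter_mem_le {k M : ℕ} (B : Fin k → Finset I)
    (hB : ∀ t, (B t).Nonempty) (hM : ∀ i, #{t | i ∈ B t} ≤ M) :
    k ≤ M * Fintype.card I := by
  choose e he using hB
  simpa using card_le_mul_card_image_of_maps_to (s := univ) (t := univ)
    (fun t _ => mem_univ (e t)) M fun i _ =>
      (card_le_card fun t ht => by simpa [(mem_filter.mp ht).2] using he t).trans (hM i)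

theorem card_le_of_disjoint_blocks {k : ℕ} (B : Fin k → Finset I) (hB : ∀ t, IsBlock f x (B t))
    (hD : ∀ t t', t ≠ t' → Disjoint (B t) (B t')) : k ≤ Fintype.card I := by
  simpa using card_le_mul_of_card_filter_mem_le B (fun t => (hB t).nonempty)
    (card_filter_mem_le_one_of_disjoint hD)

theorem bddAbove_bsAt_set (f : (I → Bool) → Bool) (x : I → Bool) :
    BddAbove {k | ∃ B : Fin k → Finset I, (∀ t, IsBlock f x (B t)) ∧
      ∀ t t', t ≠ t' → Disjoint (B t) (B t')} :=
  ⟨Fintype.card I, fun _ ⟨B, hB, hD⟩ => card_le_of_disjoint_blocks B hB hD⟩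

theorem le_bsAt {k : ℕ} (B : Fin k → Finset I) (hB : ∀ t, IsBlock f x (B t))
    (hD : ∀ t t', t ≠ t' → Disjoint (B t) (B t')) : k ≤ bsAt f x :=
  le_csSup (bddAbove_bsAt_set f x) ⟨B, hB, hD⟩

theorem exists_disjoint_blocks_of_le_bsAt {k : ℕ} (hk : k ≤ bsAt f x) :
    ∃ B : Fin k → Finset I, (∀ t, IsBlock f x (B t)) ∧
      ∀ t t', t ≠ t' → Disjoint (B t) (B t') := by
  obtain ⟨B, hB, hD⟩ : bsAt f x ∈ _ :=
    Nat.sSup_mem ⟨0, Fin.elim0, fun t => t.elim0, fun t => t.elim0⟩ (bddAbove_bsAt_set f x)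
  exact ⟨fun s => B (Fin.castLE hk s), fun s => hB _,
    fun s s' hss => hD _ _ fun h => hss (Fin.castLE_injective hk h)⟩

theorem bsAt_le_card (f : (I → Bool) → Bool) (x : I → Bool) : bsAt f x ≤ Fintype.card I :=
  csSup_le' fun _ ⟨B, hB, hD⟩ => card_le_of_disjoint_blocks B hB hD

theorem bddAbove_bsb_set (f : (I → Bool) → Bool) (b : Bool) :
    BddAbove {k | ∃ x, f x = b ∧ k = bsAt f x} :=
  ⟨Fintype.card I, fun _ ⟨y, _, hy⟩ => hy ▸ bsAt_le_card f y⟩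

theorem bsAt_le_bsb {b : Bool} (h : f x = b) : bsAt f x ≤ bsb f b :=
  le_csSup (bddAbove_bsb_set f b) ⟨x, h, rfl⟩

theorem exists_bsAt_eq_bsb {b : Bool} (h : 0 < bsb f b) : ∃ x, f x = b ∧ bsAt f x = bsb f b := by
  have hne : {k | ∃ x, f x = b ∧ k = bsAt f x}.Nonempty := by
    by_contra hempty
    rw [Set.not_nonempty_iff_eq_empty] at hempty
    simp [bsb, hempty] at h
  obtain ⟨x, hx, hk⟩ : bsb f b ∈ _ :=
    Nat.sSup_mem hne (bddAbove_bsb_set f b)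
  exact ⟨x, hx, hk.symm⟩

theorem exists_blocks_bsMAt (f : (I → Bool) → Bool) (M : ℕ) (x : I → Bool) :
    ∃ B : Fin (bsMAt f M x) → Finset I, (∀ t, IsBlock f x (B t)) ∧
      ∀ i, #{t | i ∈ B t} ≤ M := by
  let S := {k | ∃ B : Fin k → Finset I, (∀ t, IsBlock f x (B t)) ∧ ∀ i, #{t | i ∈ B t} ≤ M}
  exact Nat.sSup_mem (s := S) ⟨0, Fin.elim0, fun t => t.elim0, fun i => by simp⟩
    ⟨M * Fintype.card I, fun _ ⟨B, hB, hM⟩ =>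
      card_le_mul_of_card_filter_mem_le B (fun t => (hB t).nonempty) hM⟩

theorem bsMAt_zero (f : (I → Bool) → Bool) (x : I → Bool) : bsMAt f 0 x = 0 := by
  obtain ⟨B, hB, hM⟩ := exists_blocks_bsMAt f 0 x
  by_contra hne
  obtain ⟨i, hi⟩ := (hB ⟨0, Nat.pos_of_ne_zero hne⟩).nonempty
  have := hM i
  simp only [Nat.le_zero, card_eq_zero, filter_eq_empty_iff, mem_univ, true_implies] at this
  exact this hi

def liftBlock (S : Finset I) (c : I → Finset J) : Finset (I × J) :=
  {q | q.1 ∈ S ∧ q.2 ∈ c q.1}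

theorem disjoint_liftBlock {S S' : Finset I} {c c' : I → Finset J}
    (h : ∀ i ∈ S, i ∈ S' → Disjoint (c i) (c' i)) :
    Disjoint (liftBlock S c) (liftBlock S' c') := by
  rw [disjoint_left]
  rintro ⟨i, j⟩ hq hq'
  simp only [liftBlock, mem_filter, mem_univ, true_and] at hq hq'
  exact disjoint_left.mp (h i hq.1 hq'.1) hq.2 hq'.2

theorem comp_flipSet_liftBlock (g₁ : (I → Bool) → Bool) {g₂ : (J → Bool) → Bool}
    {p : I → J → Bool} {S : Finset I} {c : I → Finset J}
    (hc : ∀ i ∈ S, IsBlock g₂ (p i) (c i)) :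
    comp g₁ g₂ (flipSet (Function.uncurry p) (liftBlock S c)) =
      g₁ (flipSet (fun i => g₂ (p i)) S) := by
  refine congrArg g₁ (funext fun i => ?_)
  change g₂ (fun j => flipSet (Function.uncurry p) (liftBlock S c) (i, j)) = _
  by_cases hi : i ∈ S
  · have hslice : (fun j => flipSet (Function.uncurry p) (liftBlock S c) (i, j)) =
        flipSet (p i) (c i) := by
      funext j
      simp [flipSet, liftBlock, hi]
    rw [hslice, (hc i hi).eq_not]
    simp [flipSet, hi]
  · have hslice : (fun j => flipSet (Function.uncurry p) (liftBlock S c) (i, j)) = p i := by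
      funext j
      simp [flipSet, liftBlock, hi]
    rw [hslice]
    simp [flipSet, hi]

theorem IsBlock.comp_liftBlock {g₁ : (I → Bool) → Bool} {g₂ : (J → Bool) → Bool}
    {p : I → J → Bool} {S : Finset I} {c : I → Finset J}
    (hS : IsBlock g₁ (fun i => g₂ (p i)) S) (hc : ∀ i ∈ S, IsBlock g₂ (p i) (c i)) :
    IsBlock (comp g₁ g₂) (Function.uncurry p) (liftBlock S c) := by
  rw [IsBlock, comp_flipSet_liftBlock g₁ hc]
  exact hS

theorem bsMAt_le_bsAt_comp (g₁ : (I → Bool) → Bool) (g₂ : (J → Bool) → Bool) {M : ℕ}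
    (hM : 0 < M) (p : I → J → Bool) (hp : ∀ i, M ≤ bsAt g₂ (p i)) :
    bsMAt g₁ M (fun i => g₂ (p i)) ≤ bsAt (comp g₁ g₂) (Function.uncurry p) := by
  obtain ⟨B, hB, hmult⟩ := exists_blocks_bsMAt g₁ M (fun i => g₂ (p i))
  choose C hC hCD using fun i => exists_disjoint_blocks_of_le_bsAt (hp i)
  have : Nonempty (Fin M) := ⟨⟨0, hM⟩⟩
  choose σ hσ using fun i => exists_injOn_of_card_le (β := Fin M) {t | i ∈ B t}
    ((hmult i).trans_eq (Fintype.card_fin M).symm)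
  refine le_bsAt (fun t => liftBlock (B t) fun i => C i (σ i t))
    (fun t => (hB t).comp_liftBlock fun i _ => hC i _) fun t t' htt' => ?_
  refine disjoint_liftBlock fun i hi hi' => hCD i _ _ fun h => htt' (hσ i ?_ ?_ h)
  · simpa using hi
  · simpa using hi'

end BS

open BS in
theorem bs_comp_ge_bsM_general {n m : ℕ}
    (g₁ : (Fin n → Bool) → Bool) (g₂ : (Fin m → Bool) → Bool)
    (b : Bool) :
    bsMb g₁ (min (bsb g₂ false) (bsb g₂ true)) b ≤ bsb (comp g₁ g₂) b := by
  set M := min (bsb g₂ false) (bsb g₂ true)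
  refine csSup_le' ?_
  rintro _ ⟨x, hx, rfl⟩
  obtain hM | hM := M.eq_zero_or_pos
  · rw [hM, bsMAt_zero]
    exact Nat.zero_le _
  have hrealise : ∀ i, ∃ p, g₂ p = x i ∧ M ≤ bsAt g₂ p := fun i => by
    have hMle : M ≤ bsb g₂ (x i) := by cases x i <;> simp [M]
    obtain ⟨p, hp, hbs⟩ := exists_bsAt_eq_bsb (hM.trans_le hMle)
    exact ⟨p, hp, hbs ▸ hMle⟩
  choose p hpx hpM using hrealise
  obtain rfl : (fun i => g₂ (p i)) = x := funext hpx
  exact (bsMAt_le_bsAt_comp g₁ g₂ hM p hpM).trans (bsAt_le_bsb hx)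

open BS in
/-- Let `g₁` and `g₂` be non-constant boolean functions and
`G := g₁ ∘ g₂` their composition.  Then for each `b`,
`bs_b(G) ≥ bs^M_b(g₁)` where `M = min{bs_0(g₂), bs_1(g₂)}`. -/
theorem bs_comp_ge_bsM {n m : ℕ}
    (g₁ : (Fin n → Bool) → Bool) (g₂ : (Fin m → Bool) → Bool)
    (h1f : ∃ x, g₁ x = false) (h1t : ∃ x, g₁ x = true)
    (h2f : ∃ x, g₂ x = false) (h2t : ∃ x, g₂ x = true)
    (b : Bool) :
    bsMb g₁ (min (bsb g₂ false) (bsb g₂ true)) b ≤ bsb (comp g₁ g₂) b :=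
  bs_comp_ge_bsM_general g₁ g₂ b
end
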